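/- arXiv:2402.09823 — 7 statements merged into one kernel-verified Lean document; each statement's English description precedes it below -/
import Mathlib

section
/- Let g : ℂ → ℂ be an entire function satisfying g(z+1) = g(z) for all z ∈ ℂ. Suppose there exist ν ∈ ℂ with Im ν > 0 and μ ∈ ℂ such that g(z+ν) = g(z) + μ for all z ∈ ℂ. Then g is constant and μ = 0. -/
/-!
The derivative `g'` is entire and has the two `ℝ`-linearly independent periods `1` and `ν`, so it
is bounded (its range is the image of a compact fundamental parallelogram) and hence constant by
Liouville. Thus `g` is affine, `g z = g 0 + c z`; periodicity under `z ↦ z + 1` forces `c = 0`, and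
then `μ = g ν - g 0 = 0`.
-/

open Complex Set Function

lemma Complex.linearIndependent_one_of_im_ne_zero {ν : ℂ} (hν : ν.im ≠ 0) :
    LinearIndependent ℝ ![1, ν] :=
  (LinearIndependent.pair_iff' one_ne_zero).2 fun a ha => hν (by simpa using congr_arg im ha.symm)

namespace PeriodPair

lemma isCompact_range_of_periodic {F : Type*} [TopologicalSpace F] (L : PeriodPair)
    {f : ℂ → F} (hf : Continuous f) (h₁ : Periodic f L.ω₁) (h₂ : Periodic f L.ω₂) :
    IsCompact (range f) := by
  refine IsZLattice.isCompact_range_of_periodic L.lattice f hf fun z w hw => ?_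
  obtain ⟨m, n, rfl⟩ := mem_lattice.mp hw
  rw [← add_assoc, h₂.int_mul n, h₁.int_mul m]

end PeriodPair

lemma Differentiable.apply_eq_apply_of_periodic {E : Type*} [NormedAddCommGroup E]
    [NormedSpace ℂ E] (L : PeriodPair) {f : ℂ → E} (hf : Differentiable ℂ f)
    (h₁ : Periodic f L.ω₁) (h₂ : Periodic f L.ω₂) (z w : ℂ) : f z = f w :=
  hf.apply_eq_apply_of_bounded (L.isCompact_range_of_periodic hf.continuous h₁ h₂).isBounded z w

lemma periodic_deriv_of_add_const {𝕜 F : Type*} [NontriviallyNormedField 𝕜]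
    [NormedAddCommGroup F] [NormedSpace 𝕜 F] {g : 𝕜 → F} {c : 𝕜} {μ : F}
    (h : ∀ z, g (z + c) = g z + μ) : Periodic (deriv g) c := fun z => by
  rw [← deriv_comp_add_const, funext h, deriv_add_const]

lemma eq_add_smul_of_deriv_eq {𝕜 F : Type*} [RCLike 𝕜] [NormedAddCommGroup F] [NormedSpace 𝕜 F]
    {g : 𝕜 → F} {c : F} (hg : Differentiable 𝕜 g) (h : ∀ z, deriv g z = c) (z : 𝕜) :
    g z = g 0 + z • c := by
  have hderiv : ∀ x, HasDerivAt (fun x => g x - x • c) 0 x := fun x => by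
    simpa [h x] using (hg x).hasDerivAt.fun_sub ((hasDerivAt_id x).smul_const c)
  have := is_const_of_deriv_eq_zero (fun x => (hderiv x).differentiableAt)
    (fun x => (hderiv x).deriv) z 0
  rwa [zero_smul, sub_zero, sub_eq_iff_eq_add] at this

/-- If an entire function `g` satisfies `g (z + 1) = g z` for all `z` and
`g (z + ν) = g z + μ` for some `ν` with positive imaginary part, then `g` is
constant and `μ = 0`. -/
theorem stmt_0 (g : ℂ → ℂ) (hg : Differentiable ℂ g)
    (hper : ∀ z : ℂ, g (z + 1) = g z)
    (ν μ : ℂ) (hν : 0 < ν.im)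
    (hqp : ∀ z : ℂ, g (z + ν) = g z + μ) :
    (∀ z w : ℂ, g z = g w) ∧ μ = 0 := by
  let L : PeriodPair := ⟨1, ν, linearIndependent_one_of_im_ne_zero hν.ne'⟩
  have hper₁ : Periodic (deriv g) 1 := periodic_deriv_of_add_const (μ := 0) (by simpa using hper)
  have hper₂ : Periodic (deriv g) ν := periodic_deriv_of_add_const hqp
  have hlin : ∀ z, g z = g 0 + z • deriv g 0 :=
    eq_add_smul_of_deriv_eq hg fun z => hg.deriv.apply_eq_apply_of_periodic L hper₁ hper₂ z 0
  have hslope : deriv g 0 = 0 := by simpa [hlin 1] using hper 0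
  have hconst : ∀ z, g z = g 0 := fun z => by rw [hlin z, hslope, smul_zero, add_zero]
  refine ⟨fun z w => (hconst z).trans (hconst w).symm, ?_⟩
  simpa [hconst ν] using hqp 0
end

section
/- Let U ⊆ ℂ be a nonempty open connected set, and let τ : U → ℂ be holomorphic with Im τ(z₁) > 0 for every z₁ ∈ U and with derivative τ′ not identically zero on U. Let g₁₁, g₁₂, g₂₁, g₂₂ : U × ℂ → ℂ be holomorphic functions of two complex variables which are 1-periodic in the second variable (g(z₁, z₂+1) = g(z₁, z₂) for all (z₁,z₂)) and which satisfy, for all (z₁, z₂) ∈ U × ℂ and for i = 1, 2: (a) g₁₂(z₁, z₂+τ(z₁)) = g₁₂(z₁, z₂); (b) g_{ii}(z₁, z₂+τ(z₁)) + (−1)^i · τ′(z₁) · g₁₂(z₁, z₂+τ(z₁)) = g_{ii}(z₁, z₂); (c) g₂₁(z₁, z₂+τ(z₁)) + τ′(z₁) · (g₁₁ − g₂₂)(z₁, z₂+τ(z₁)) − τ′(z₁)² · g₁₂(z₁, z₂+τ(z₁)) = g₂₁(z₁, z₂). Then g₁₂ is identically zero, g₁₁ = g₂₂, and each of g₁₁,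 g₂₂, g₂₁ is independent of the second variable z₂ (i.e. g(z₁, z₂) = g(z₁, z₂′) for all z₂, z₂′). -/
open Complex Set Bornology

private lemma per_int (f : ℂ → ℂ) (a : ℂ) (hp : ∀ z, f (z + a) = f z) :
    ∀ (n : ℤ) (z : ℂ), f (z + (n : ℂ) * a) = f z := by
  have hm : ∀ z, f (z - a) = f z := by
    intro z
    have := hp (z - a)
    simpa using this.symm
  intro n
  induction n using Int.induction_on with
  | zero => simp
  | succ k ih =>
    intro z
    have ih' := ih z
    push_cast at ih' ⊢
    rw [show z + ((k : ℂ) + 1) * a = z + (k : ℂ) * a + a by ring, hp]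
    exact ih'
  | pred k ih =>
    intro z
    have ih' := ih z
    push_cast at ih' ⊢
    rw [show z + (-(k : ℂ) - 1) * a = z + -(k : ℂ) * a - a by ring, hm]
    exact ih'

private lemma doubly_periodic_const (f : ℂ → ℂ) (hf : Differentiable ℂ f) (τ : ℂ)
    (hτ : 0 < τ.im) (h1 : ∀ z, f (z + 1) = f z) (h2 : ∀ z, f (z + τ) = f z) :
    ∀ z w, f z = f w := by
  have hτne : τ.im ≠ 0 := ne_of_gt hτ
  set K : Set ℂ := (fun p : ℝ × ℝ => (p.1 : ℂ) + (p.2 : ℂ) * τ) '' (Icc 0 1 ×ˢ Icc 0 1) with hK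
  have hKc : IsCompact K := (isCompact_Icc.prod isCompact_Icc).image (by fun_prop)
  have hsub : range f ⊆ f '' K := by
    rintro _ ⟨z, rfl⟩
    set n : ℤ := ⌊z.im / τ.im⌋ with hn
    set w : ℂ := z - (n : ℂ) * τ with hw
    set t : ℝ := w.im / τ.im with ht
    set m : ℤ := ⌊w.re - t * τ.re⌋ with hm
    set s : ℝ := w.re - t * τ.re - (m : ℝ) with hs
    have hwim : w.im = z.im - (n : ℝ) * τ.im := by
      rw [hw]
      simp [Complex.sub_im, Complex.mul_im]
    have hwre : w.re = z.re - (n : ℝ) * τ.re := by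
      rw [hw]
      simp [Complex.sub_re, Complex.mul_re]
    have htim : t * τ.im = z.im - (n : ℝ) * τ.im := by
      rw [ht, div_mul_cancel₀ _ hτne, hwim]
    have htval : t = z.im / τ.im - (n : ℝ) := by
      rw [ht, hwim, sub_div, mul_div_assoc, div_self hτne, mul_one]
    have ht0 : 0 ≤ t := by
      rw [htval]; have := Int.floor_le (z.im / τ.im); rw [← hn] at this; linarith
    have ht1 : t ≤ 1 := by
      rw [htval]; have := Int.lt_floor_add_one (z.im / τ.im); rw [← hn] at this; linarith
    have hs0 : 0 ≤ s := by
      rw [hs]; have := Int.floor_le (w.re - t * τ.re); rw [← hm] at this; linarith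
    have hs1 : s ≤ 1 := by
      rw [hs]; have := Int.lt_floor_add_one (w.re - t * τ.re); rw [← hm] at this; linarith
    have hzz : (s : ℂ) + (t : ℂ) * τ = z + (-n : ℂ) * τ + (-m : ℂ) * 1 := by
      apply Complex.ext
      · simp only [Complex.add_re, Complex.add_im, Complex.mul_re, Complex.mul_im,
          Complex.ofReal_re, Complex.ofReal_im, Complex.neg_re, Complex.neg_im,
          Complex.intCast_re, Complex.intCast_im, Complex.one_re, Complex.one_im,
          neg_zero, zero_mul, mul_zero, mul_one, sub_zero, zero_sub, add_zero, zero_add]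
        rw [hs, hwre]
        ring
      · simp only [Complex.add_re, Complex.add_im, Complex.mul_re, Complex.mul_im,
          Complex.ofReal_re, Complex.ofReal_im, Complex.neg_re, Complex.neg_im,
          Complex.intCast_re, Complex.intCast_im, Complex.one_re, Complex.one_im,
          neg_zero, zero_mul, mul_zero, mul_one, sub_zero, zero_sub, add_zero, zero_add]
        rw [htim]
        ring
    refine ⟨(s : ℂ) + (t : ℂ) * τ, ⟨(s, t), ⟨⟨hs0, hs1⟩, ⟨ht0, ht1⟩⟩, rfl⟩, ?_⟩
    rw [hzz]
    have e1 : ((-m : ℤ) : ℂ) = (-m : ℂ) := by push_cast; ring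
    have e2 : ((-n : ℤ) : ℂ) = (-n : ℂ) := by push_cast; ring
    rw [← e1, ← e2, per_int f 1 h1 (-m), per_int f τ h2 (-n)]
  have hb : IsBounded (range f) := ((hKc.image hf.continuous).isBounded).subset hsub
  exact fun z w => hf.apply_eq_apply_of_bounded hb z w

private lemma quasi_periodic (f : ℂ → ℂ) (hf : Differentiable ℂ f) (τ c : ℂ)
    (hτ : 0 < τ.im) (h1 : ∀ z, f (z + 1) = f z) (h2 : ∀ z, f (z + τ) = f z + c) :
    c = 0 ∧ ∀ z w, f z = f w := by
  have hfa : AnalyticOnNhd ℂ f univ := analyticOnNhd_univ_iff_differentiable.2 hf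
  have hd : Differentiable ℂ (deriv f) := analyticOnNhd_univ_iff_differentiable.1 hfa.deriv
  have hd1 : ∀ z, deriv f (z + 1) = deriv f z := by
    intro z
    have hfun : (fun z => f (z + 1)) = f := funext h1
    calc deriv f (z + 1) = deriv (fun z => f (z + 1)) z := (deriv_comp_add_const f 1 z).symm
      _ = deriv f z := by rw [hfun]
  have hdτ : ∀ z, deriv f (z + τ) = deriv f z := by
    intro z
    have hfun : (fun z => f (z + τ)) = fun z => f z + c := funext h2
    calc deriv f (z + τ) = deriv (fun z => f (z + τ)) z := (deriv_comp_add_const f τ z).symm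
      _ = deriv (fun z => f z + c) z := by rw [hfun]
      _ = deriv f z := by rw [deriv_add_const]
  have hdc : ∀ z w, deriv f z = deriv f w := doubly_periodic_const (deriv f) hd τ hτ hd1 hdτ
  set a : ℂ := deriv f 0 with ha
  have hg : Differentiable ℂ (fun z => f z - a * z) :=
    hf.sub (differentiable_id.const_mul a)
  have hg' : ∀ z, deriv (fun z => f z - a * z) z = 0 := by
    intro z
    have h₁ : DifferentiableAt ℂ f z := hf z
    have h₂ : DifferentiableAt ℂ (fun z : ℂ => a * z) z := by fun_prop
    rw [deriv_fun_sub h₁ h₂]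
    have : deriv (fun z : ℂ => a * z) z = a := by
      have h := ((hasDerivAt_id z).const_mul a).deriv
      simpa using h
    rw [this, hdc z 0, ← ha, sub_self]
  have hconst := is_const_of_deriv_eq_zero hg hg'
  have ha0 : a = 0 := by
    have h10 := hconst 1 0
    have hf10 : f 1 = f 0 := by simpa using h1 0
    simp only [mul_one, mul_zero, sub_zero] at h10
    rw [hf10] at h10
    linear_combination -h10
  have hfc : ∀ z w, f z = f w := by
    intro z w
    have := hconst z w
    rw [ha0] at this
    simpa using this
  refine ⟨?_, hfc⟩
  have := h2 0
  rw [hfc (0 + τ) 0] at this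
  linear_combination -this

/-- The invariance equations for the `dz₂`-part of the matrix of a lifted affine
connection on an elliptic surface with non-constant period function `τ` force
`g₁₂ = 0`, `g₁₁ = g₂₂`, and independence of the second variable. -/
theorem stmt_1 (U : Set ℂ) (hUne : U.Nonempty) (hUo : IsOpen U) (hUc : IsConnected U)
    (τ : ℂ → ℂ) (hτ : DifferentiableOn ℂ τ U)
    (hτim : ∀ z₁ ∈ U, 0 < (τ z₁).im)
    (hτ' : ∃ z₁ ∈ U, deriv τ z₁ ≠ 0)
    (g₁₁ g₁₂ g₂₁ g₂₂ : ℂ × ℂ → ℂ)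
    (hg₁₁ : DifferentiableOn ℂ g₁₁ (U ×ˢ (Set.univ : Set ℂ)))
    (hg₁₂ : DifferentiableOn ℂ g₁₂ (U ×ˢ (Set.univ : Set ℂ)))
    (hg₂₁ : DifferentiableOn ℂ g₂₁ (U ×ˢ (Set.univ : Set ℂ)))
    (hg₂₂ : DifferentiableOn ℂ g₂₂ (U ×ˢ (Set.univ : Set ℂ)))
    (hper : ∀ z₁ z₂ : ℂ,
      g₁₁ (z₁, z₂ + 1) = g₁₁ (z₁, z₂) ∧ g₁₂ (z₁, z₂ + 1) = g₁₂ (z₁, z₂) ∧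
      g₂₁ (z₁, z₂ + 1) = g₂₁ (z₁, z₂) ∧ g₂₂ (z₁, z₂ + 1) = g₂₂ (z₁, z₂))
    (ha : ∀ z₁ ∈ U, ∀ z₂ : ℂ, g₁₂ (z₁, z₂ + τ z₁) = g₁₂ (z₁, z₂))
    (hb₁ : ∀ z₁ ∈ U, ∀ z₂ : ℂ,
      g₁₁ (z₁, z₂ + τ z₁) - deriv τ z₁ * g₁₂ (z₁, z₂ + τ z₁) = g₁₁ (z₁, z₂))
    (hb₂ : ∀ z₁ ∈ U, ∀ z₂ : ℂ,
      g₂₂ (z₁, z₂ + τ z₁) + deriv τ z₁ * g₁₂ (z₁, z₂ + τ z₁) = g₂₂ (z₁, z₂))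
    (hc : ∀ z₁ ∈ U, ∀ z₂ : ℂ,
      g₂₁ (z₁, z₂ + τ z₁) + deriv τ z₁ * (g₁₁ (z₁, z₂ + τ z₁) - g₂₂ (z₁, z₂ + τ z₁))
        - (deriv τ z₁) ^ 2 * g₁₂ (z₁, z₂ + τ z₁) = g₂₁ (z₁, z₂)) :
    (∀ z₁ ∈ U, ∀ z₂ : ℂ, g₁₂ (z₁, z₂) = 0) ∧
    (∀ z₁ ∈ U, ∀ z₂ : ℂ, g₁₁ (z₁, z₂) = g₂₂ (z₁, z₂)) ∧
    (∀ z₁ ∈ U, ∀ z₂ z₂' : ℂ,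
      g₁₁ (z₁, z₂) = g₁₁ (z₁, z₂') ∧ g₂₂ (z₁, z₂) = g₂₂ (z₁, z₂') ∧
      g₂₁ (z₁, z₂) = g₂₁ (z₁, z₂')) := by
  obtain ⟨z₀, hz₀U, hz₀⟩ := hτ'
  have hslice : ∀ (g : ℂ × ℂ → ℂ), DifferentiableOn ℂ g (U ×ˢ (Set.univ : Set ℂ)) →
      ∀ z₁ ∈ U, Differentiable ℂ (fun z₂ => g (z₁, z₂)) := by
    intro g hg z₁ hz₁ z₂
    have hA : DifferentiableAt ℂ g (z₁, z₂) :=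
      hg.differentiableAt ((hUo.prod isOpen_univ).mem_nhds ⟨hz₁, trivial⟩)
    exact hA.comp z₂ ((differentiableAt_const z₁).prodMk differentiableAt_id)
  have hsec : ∀ (g : ℂ × ℂ → ℂ), DifferentiableOn ℂ g (U ×ˢ (Set.univ : Set ℂ)) →
      DifferentiableOn ℂ (fun z => g (z, 0)) U := by
    intro g hg
    exact hg.comp ((differentiable_id.prodMk (differentiable_const (0 : ℂ))).differentiableOn)
      (fun z hz => ⟨hz, trivial⟩)
  have hτa : AnalyticOnNhd ℂ τ U := (analyticOnNhd_iff_differentiableOn hUo).2 hτ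
  have hτ'a : AnalyticOnNhd ℂ (deriv τ) U := hτa.deriv
  -- key facts at each z₁ ∈ U
  have key : ∀ z₁ ∈ U, (∀ z₂ w₂, g₁₂ (z₁, z₂) = g₁₂ (z₁, w₂)) ∧
      deriv τ z₁ * g₁₂ (z₁, 0) = 0 ∧ (∀ z₂ w₂, g₁₁ (z₁, z₂) = g₁₁ (z₁, w₂)) ∧
      (∀ z₂ w₂, g₂₂ (z₁, z₂) = g₂₂ (z₁, w₂)) := by
    intro z₁ hz₁
    have h12c : ∀ z w, g₁₂ (z₁, z) = g₁₂ (z₁, w) :=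
      doubly_periodic_const _ (hslice _ hg₁₂ z₁ hz₁) (τ z₁) (hτim z₁ hz₁)
        (fun z => (hper z₁ z).2.1) (fun z => ha z₁ hz₁ z)
    have h11 := quasi_periodic (fun z₂ => g₁₁ (z₁, z₂)) (hslice _ hg₁₁ z₁ hz₁) (τ z₁)
      (deriv τ z₁ * g₁₂ (z₁, 0)) (hτim z₁ hz₁) (fun z => (hper z₁ z).1)
      (fun z => by
        have h := hb₁ z₁ hz₁ z
        rw [h12c (z + τ z₁) 0] at h
        linear_combination h)
    have h22 := quasi_periodic (fun z₂ => g₂₂ (z₁, z₂)) (hslice _ hg₂₂ z₁ hz₁) (τ z₁)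
      (-(deriv τ z₁ * g₁₂ (z₁, 0))) (hτim z₁ hz₁) (fun z => (hper z₁ z).2.2.2)
      (fun z => by
        have h := hb₂ z₁ hz₁ z
        rw [h12c (z + τ z₁) 0] at h
        linear_combination h)
    exact ⟨h12c, h11.1, h11.2, h22.2⟩
  -- identity theorem gives g₁₂ ≡ 0
  have h12zero : ∀ z₁ ∈ U, ∀ z₂ : ℂ, g₁₂ (z₁, z₂) = 0 := by
    have hFanal : AnalyticOnNhd ℂ (fun z => g₁₂ (z, 0)) U :=
      (analyticOnNhd_iff_differentiableOn hUo).2 (hsec _ hg₁₂)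
    have hev : (fun z => g₁₂ (z, 0)) =ᶠ[nhds z₀] 0 := by
      have h1 : ∀ᶠ z in nhds z₀, deriv τ z ≠ 0 :=
        (hτ'a z₀ hz₀U).continuousAt.eventually_ne hz₀
      have h2 : ∀ᶠ z in nhds z₀, z ∈ U := hUo.mem_nhds hz₀U
      filter_upwards [h1, h2] with z hne hzU
      exact (mul_eq_zero.1 (key z hzU).2.1).resolve_left hne
    have hF0 := hFanal.eqOn_zero_of_preconnected_of_eventuallyEq_zero
      hUc.isPreconnected hz₀U hev
    intro z₁ hz₁ z₂
    exact ((key z₁ hz₁).1 z₂ 0).trans (hF0 hz₁)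
  -- g₂₁ facts
  have key21 : ∀ z₁ ∈ U, deriv τ z₁ * (g₁₁ (z₁, 0) - g₂₂ (z₁, 0)) = 0 ∧
      (∀ z₂ w₂, g₂₁ (z₁, z₂) = g₂₁ (z₁, w₂)) := by
    intro z₁ hz₁
    obtain ⟨-, -, h11c, h22c⟩ := key z₁ hz₁
    have h := quasi_periodic (fun z₂ => g₂₁ (z₁, z₂)) (hslice _ hg₂₁ z₁ hz₁) (τ z₁)
      (-(deriv τ z₁ * (g₁₁ (z₁, 0) - g₂₂ (z₁, 0)))) (hτim z₁ hz₁)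
      (fun z => (hper z₁ z).2.2.1)
      (fun z => by
        have hcz := hc z₁ hz₁ z
        rw [h12zero z₁ hz₁ (z + τ z₁), h11c (z + τ z₁) 0, h22c (z + τ z₁) 0] at hcz
        linear_combination hcz)
    exact ⟨by linear_combination -h.1, h.2⟩
  -- identity theorem gives g₁₁ (·,0) = g₂₂ (·,0)
  have hD0 : ∀ z ∈ U, g₁₁ (z, 0) - g₂₂ (z, 0) = 0 := by
    have hDanal : AnalyticOnNhd ℂ (fun z => g₁₁ (z, 0) - g₂₂ (z, 0)) U :=
      (analyticOnNhd_iff_differentiableOn hUo).2 ((hsec _ hg₁₁).sub (hsec _ hg₂₂))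
    have hev : (fun z => g₁₁ (z, 0) - g₂₂ (z, 0)) =ᶠ[nhds z₀] 0 := by
      have h1 : ∀ᶠ z in nhds z₀, deriv τ z ≠ 0 :=
        (hτ'a z₀ hz₀U).continuousAt.eventually_ne hz₀
      have h2 : ∀ᶠ z in nhds z₀, z ∈ U := hUo.mem_nhds hz₀U
      filter_upwards [h1, h2] with z hne hzU
      exact (mul_eq_zero.1 (key21 z hzU).1).resolve_left hne
    intro z hz
    exact hDanal.eqOn_zero_of_preconnected_of_eventuallyEq_zero
      hUc.isPreconnected hz₀U hev hz
  refine ⟨h12zero, ?_, ?_⟩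
  · intro z₁ hz₁ z₂
    obtain ⟨-, -, h11c, h22c⟩ := key z₁ hz₁
    calc g₁₁ (z₁, z₂) = g₁₁ (z₁, 0) := h11c _ _
      _ = g₂₂ (z₁, 0) := by linear_combination hD0 z₁ hz₁
      _ = g₂₂ (z₁, z₂) := h22c _ _
  · intro z₁ hz₁ z₂ z₂'
    exact ⟨(key z₁ hz₁).2.2.1 _ _, (key z₁ hz₁).2.2.2 _ _, (key21 z₁ hz₁).2 _ _⟩
end

section
/- Let τ' be a complex number with positive imaginary part and let Λ' = {m + n·τ' : m, n ∈ ℤ} ⊆ ℂ be the associated lattice. For every pair a, b ∈ ℂ there exists a function h : ℂ → ℂ which is holomorphic on ℂ ∖ Λ' and meromorphic at every point of Λ' (i.e. for each p ∈ Λ' some power (z−p)^N · h(z) extends holomorphically across p), such that h(z+1) = h(z) + a and h(z+τ') = h(z) + b for all z ∈ ℂ ∖ Λ'. -/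
open Complex

namespace Stmt2Aux

noncomputable section

/-- The complex absolute value, as an `AbsoluteValue` (the norm). -/
def Complex.abs : AbsoluteValue ℂ ℝ := NormedField.toAbsoluteValue ℂ

lemma Complex.norm_eq_abs (z : ℂ) : ‖z‖ = Complex.abs z := rfl

lemma Complex.abs_exp (z : ℂ) : Complex.abs (Complex.exp z) = Real.exp z.re :=
  _root_.Complex.norm_exp z

lemma Complex.abs_re_le_abs (z : ℂ) : |z.re| ≤ Complex.abs z := _root_.Complex.abs_re_le_norm z

lemma Complex.abs_im_le_abs (z : ℂ) : |z.im| ≤ Complex.abs z := _root_.Complex.abs_im_le_norm z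

/-- `E z = exp(2πi z)`. -/
def E (z : ℂ) : ℂ := Complex.exp (2 * ↑Real.pi * I * z)

lemma E_ne_zero (z : ℂ) : E z ≠ 0 := Complex.exp_ne_zero _

lemma E_add (z w : ℂ) : E (z + w) = E z * E w := by
  rw [E, E, E, ← Complex.exp_add]; ring_nf

lemma abs_E (z : ℂ) : Complex.abs (E z) = Real.exp (-(2 * Real.pi * z.im)) := by
  rw [E, Complex.abs_exp]
  congr 1
  simp [Complex.mul_re, Complex.mul_im]

lemma E_int (m : ℤ) : E (m : ℂ) = 1 := by
  rw [E]
  have : 2 * ↑Real.pi * I * (m : ℂ) = (m : ℤ) * (2 * ↑Real.pi * I) := by push_cast; ring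
  rw [this, Complex.exp_int_mul_two_pi_mul_I]

lemma E_eq_one_iff (z : ℂ) : E z = 1 ↔ ∃ m : ℤ, z = (m : ℂ) := by
  rw [E, Complex.exp_eq_one_iff]
  constructor
  · rintro ⟨n, hn⟩
    refine ⟨n, ?_⟩
    have h2 : (2 * ↑Real.pi * I : ℂ) ≠ 0 := by
      have := Real.pi_ne_zero
      intro h
      apply this
      simpa [I_ne_zero, Complex.ext_iff] using h
    rcases mul_eq_mul_right_iff.mp (by linear_combination hn : z * (2 * ↑Real.pi * I) = (n:ℂ) * (2 * ↑Real.pi * I)) with h | h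
    · exact h
    · exact absurd h h2
  · rintro ⟨m, rfl⟩
    exact ⟨m, by ring⟩

lemma abs_E_lt_one {z : ℂ} (hz : 0 < z.im) : Complex.abs (E z) < 1 := by
  rw [abs_E]
  apply Real.exp_lt_one_iff.mpr
  nlinarith [Real.pi_pos]

lemma E_ne_one_of_im_ne {z : ℂ} (hz : z.im ≠ 0) : E z ≠ 1 := by
  intro h
  have := congrArg Complex.abs h
  rw [abs_E, map_one, Real.exp_eq_one_iff] at this
  have hpi := Real.pi_pos
  have : z.im = 0 := by nlinarith
  exact hz this


def lat (τ' : ℂ) : Set ℂ := {z : ℂ | ∃ m n : ℤ, z = (m : ℂ) + (n : ℂ) * τ'}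

lemma lat_sub {τ' : ℂ} {z w : ℂ} (hz : z ∈ lat τ') (hw : w ∈ lat τ') :
    z - w ∈ lat τ' := by
  obtain ⟨m1, n1, rfl⟩ := hz
  obtain ⟨m2, n2, rfl⟩ := hw
  exact ⟨m1 - m2, n1 - n2, by push_cast; ring⟩

lemma lat_norm_lb {τ' : ℂ} (hτ' : 0 < τ'.im) {w : ℂ} (hw : w ∈ lat τ')
    (hw0 : w ≠ 0) : min 1 τ'.im ≤ Complex.abs w := by
  obtain ⟨m, n, rfl⟩ := hw
  by_cases hn : n = 0
  · subst hn
    have hm : m ≠ 0 := by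
      rintro rfl; simp at hw0
    have h1 : (1 : ℝ) ≤ |(m : ℝ)| := by
      rw [← Int.cast_abs]
      exact_mod_cast Int.one_le_abs hm
    have : |((m : ℂ) + 0 * τ').re| ≤ Complex.abs ((m : ℂ) + 0 * τ') := Complex.abs_re_le_abs _
    simp only [Int.cast_zero, zero_mul, add_zero] at this ⊢
    refine le_trans (min_le_left _ _) (le_trans ?_ this)
    simpa using h1
  · have him : ((m : ℂ) + (n : ℂ) * τ').im = n * τ'.im := by simp
    have h1 : (1 : ℝ) ≤ |(n : ℝ)| := by
      rw [← Int.cast_abs]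
      exact_mod_cast Int.one_le_abs hn
    have : |((m : ℂ) + (n : ℂ) * τ').im| ≤ Complex.abs ((m : ℂ) + (n : ℂ) * τ') :=
      Complex.abs_im_le_abs _
    rw [him, abs_mul, abs_of_pos hτ'] at this
    refine le_trans (min_le_right _ _) (le_trans ?_ this)
    nlinarith

lemma lat_closed {τ' : ℂ} (hτ' : 0 < τ'.im) : IsClosed (lat τ') := by
  set δ := min 1 τ'.im with hδ
  have hδ0 : 0 < δ := lt_min one_pos hτ'
  rw [← isOpen_compl_iff]
  rw [Metric.isOpen_iff]
  intro z hz
  by_cases hp : ∃ p ∈ lat τ', dist z p < δ / 2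
  · obtain ⟨p, hpl, hpd⟩ := hp
    have hzp : z ≠ p := by rintro rfl; exact hz hpl
    refine ⟨min (δ / 2) (dist z p), lt_min (by linarith) (dist_pos.mpr hzp), ?_⟩
    intro w hw hwl
    rw [Metric.mem_ball] at hw
    have hwp : w ≠ p := by
      rintro rfl
      rw [lt_min_iff, dist_comm] at hw
      exact lt_irrefl _ hw.2
    have h1 : dist w p < δ := by
      have ht := dist_triangle w z p
      have h1 : dist w z < δ / 2 := lt_of_lt_of_le hw (min_le_left _ _)
      linarith
    have := lat_norm_lb hτ' (lat_sub hwl hpl) (sub_ne_zero.mpr hwp)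
    rw [← hδ] at this
    rw [dist_eq, Complex.norm_eq_abs] at h1
    linarith
  · push_neg at hp
    refine ⟨δ / 2, by linarith, ?_⟩
    intro w hw hwl
    rw [Metric.mem_ball, dist_comm] at hw
    exact absurd (hp w hwl) (not_le.mpr hw)

lemma lat_isolated {τ' : ℂ} (hτ' : 0 < τ'.im) {p : ℂ} (hp : p ∈ lat τ')
    {z : ℂ} (hz : z ∈ Metric.ball p (min 1 τ'.im)) (hzl : z ∈ lat τ') : z = p := by
  by_contra hne
  have := lat_norm_lb hτ' (lat_sub hzl hp) (sub_ne_zero.mpr hne)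
  rw [Metric.mem_ball, dist_eq, Complex.norm_eq_abs] at hz
  linarith

lemma E_nat_mul_tau (τ' : ℂ) (n : ℕ) : (E τ') ^ n = E ((n : ℂ) * τ') := by
  rw [E, E, ← Complex.exp_nat_mul]
  ring_nf

lemma denomA_ne {τ' : ℂ} {z : ℂ} (hz : z ∉ lat τ') (n : ℕ) :
    E z * (E τ') ^ n ≠ 1 := by
  intro h
  rw [E_nat_mul_tau, ← E_add] at h
  obtain ⟨m, hm⟩ := (E_eq_one_iff _).mp h
  exact hz ⟨m, -n, by push_cast; linear_combination hm⟩

lemma denomB_ne {τ' : ℂ} {z : ℂ} (hz : z ∉ lat τ') (n : ℕ) :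
    E z ≠ (E τ') ^ n := by
  intro h
  rw [E_nat_mul_tau] at h
  have h2 : E (z - (n : ℂ) * τ') = 1 := by
    rw [show z - (n : ℂ) * τ' = z + -((n : ℂ) * τ') by ring, E_add]
    have : E (-((n : ℂ) * τ')) * E ((n : ℂ) * τ') = 1 := by
      rw [← E_add]; simpa using E_int 0
    rw [h]
    rw [mul_comm]
    exact this
  obtain ⟨m, hm⟩ := (E_eq_one_iff _).mp h2
  exact hz ⟨m, n, by push_cast; linear_combination hm⟩

lemma E_int_mul_tau_ne_one {τ' : ℂ} (hτ' : 0 < τ'.im) {j : ℤ} (hj : j ≠ 0) :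
    E ((j : ℂ) * τ') ≠ 1 := by
  apply E_ne_one_of_im_ne
  have : ((j : ℂ) * τ').im = (j : ℝ) * τ'.im := by simp
  rw [this]
  exact mul_ne_zero (by exact_mod_cast hj) (ne_of_gt hτ')

lemma E_lat_pt (τ' : ℂ) (m k : ℤ) : E ((m : ℂ) + (k : ℂ) * τ') = E ((k : ℂ) * τ') := by
  rw [E_add, E_int, one_mul]

lemma denomA_at {τ' : ℂ} (hτ' : 0 < τ'.im) (m k : ℤ) (n : ℕ) (hn : (n : ℤ) ≠ -k) :
    E ((m : ℂ) + (k : ℂ) * τ') * (E τ') ^ n ≠ 1 := by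
  rw [E_lat_pt, E_nat_mul_tau, ← E_add]
  have : (k : ℂ) * τ' + (n : ℂ) * τ' = ((k + n : ℤ) : ℂ) * τ' := by push_cast; ring
  rw [this]
  exact E_int_mul_tau_ne_one hτ' (by omega)

lemma denomB_at {τ' : ℂ} (hτ' : 0 < τ'.im) (m k : ℤ) (n : ℕ) (hn : (n : ℤ) ≠ k) :
    E ((m : ℂ) + (k : ℂ) * τ') ≠ (E τ') ^ n := by
  rw [E_lat_pt, E_nat_mul_tau]
  intro h
  have h2 : E (((k - n : ℤ) : ℂ) * τ') * E ((n : ℂ) * τ') = E ((n : ℂ) * τ') := by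
    rw [← E_add]
    have : ((k - n : ℤ) : ℂ) * τ' + (n : ℂ) * τ' = (k : ℂ) * τ' := by push_cast; ring
    rw [this, h]
  have h3 : E (((k - n : ℤ) : ℂ) * τ') = 1 :=
    mul_right_cancel₀ (E_ne_zero _) (by rw [one_mul]; exact h2)
  exact E_int_mul_tau_ne_one hτ' (by omega) h3

/-- Term of the first series: `E z q^n / (E z q^n - 1)`. -/
def A (τ' : ℂ) (n : ℕ) (z : ℂ) : ℂ := E z * (E τ') ^ n / (E z * (E τ') ^ n - 1)

/-- Term of the second series: `q^n / (E z - q^n)`. -/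
def B (τ' : ℂ) (n : ℕ) (z : ℂ) : ℂ := (E τ') ^ n / (E z - (E τ') ^ n)

lemma E_differentiable : Differentiable ℂ E := by
  have : Differentiable ℂ fun z : ℂ => (2 * ↑Real.pi * I) * z :=
    (differentiable_id.const_mul _)
  exact this.cexp

lemma abs_E_pos (z : ℂ) : 0 < Complex.abs (E z) :=
  AbsoluteValue.pos _ (E_ne_zero z)

lemma normA_le (τ' : ℂ) (n : ℕ) (z : ℂ)
    (h : Complex.abs (E z) * Complex.abs (E τ') ^ n ≤ 1 / 2) :
    Complex.abs (A τ' n z) ≤ 2 * (Complex.abs (E z) * Complex.abs (E τ') ^ n) := by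
  have hx : Complex.abs (E z * (E τ') ^ n) = Complex.abs (E z) * Complex.abs (E τ') ^ n := by
    rw [map_mul, map_pow]
  have hd : 1 / 2 ≤ Complex.abs (E z * (E τ') ^ n - 1) := by
    have h1 : ‖(1:ℂ)‖ - ‖E z * (E τ') ^ n‖ ≤ ‖(1:ℂ) - E z * (E τ') ^ n‖ :=
      norm_sub_norm_le _ _
    rw [norm_sub_rev] at h1
    simp only [Complex.norm_eq_abs, map_one] at h1
    rw [hx] at h1
    linarith
  rw [A, map_div₀, hx]
  rw [div_le_iff₀ (by linarith)]
  have h0 : 0 ≤ Complex.abs (E z) * Complex.abs (E τ') ^ n := by positivity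
  nlinarith

lemma normB_le (τ' : ℂ) (n : ℕ) (z : ℂ)
    (h : Complex.abs (E τ') ^ n ≤ Complex.abs (E z) / 2) :
    Complex.abs (B τ' n z) ≤ 2 / Complex.abs (E z) * Complex.abs (E τ') ^ n := by
  have hE := abs_E_pos z
  have hd : Complex.abs (E z) / 2 ≤ Complex.abs (E z - (E τ') ^ n) := by
    have h1 : ‖E z‖ - ‖(E τ') ^ n‖ ≤ ‖E z - (E τ') ^ n‖ := norm_sub_norm_le _ _
    simp only [Complex.norm_eq_abs, map_pow] at h1
    linarith
  rw [B, map_div₀, map_pow]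
  rw [div_le_iff₀ (by linarith)]
  have h0 : (0:ℝ) ≤ Complex.abs (E τ') ^ n := by positivity
  rw [div_mul_eq_mul_div, div_mul_eq_mul_div, le_div_iff₀ hE]
  nlinarith

lemma summableA {τ' : ℂ} (hτ' : 0 < τ'.im) (c : ℕ → ℂ)
    (hc : ∀ n, Complex.abs (c n) ≤ 1) (z : ℂ) :
    Summable (fun n => c n * A τ' n z) := by
  set r := Complex.abs (E τ') with hr
  have hr0 : 0 ≤ r := AbsoluteValue.nonneg _ _
  have hr1 : r < 1 := abs_E_lt_one hτ'
  apply Summable.of_norm_bounded_eventually (g := fun n => 2 * Complex.abs (E z) * r ^ n)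
    (((summable_geometric_of_lt_one hr0 hr1).mul_left _))
  rw [Nat.cofinite_eq_atTop]
  have htend : Filter.Tendsto (fun n : ℕ => Complex.abs (E z) * r ^ n)
      Filter.atTop (nhds 0) := by
    simpa using (tendsto_pow_atTop_nhds_zero_of_lt_one hr0 hr1).const_mul (Complex.abs (E z))
  filter_upwards [htend.eventually_lt_const (by norm_num : (0:ℝ) < 1/2)] with n hn
  have hA := normA_le τ' n z (le_of_lt hn)
  calc ‖c n * A τ' n z‖ = Complex.abs (c n) * Complex.abs (A τ' n z) := by
        simp [Complex.norm_eq_abs]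
    _ ≤ 1 * (2 * (Complex.abs (E z) * r ^ n)) := by
        apply mul_le_mul (hc n) hA (AbsoluteValue.nonneg _ _) zero_le_one
    _ = 2 * Complex.abs (E z) * r ^ n := by ring

lemma summableB {τ' : ℂ} (hτ' : 0 < τ'.im) (c : ℕ → ℂ)
    (hc : ∀ n, Complex.abs (c n) ≤ 1) (z : ℂ) :
    Summable (fun n => c n * B τ' (n + 1) z) := by
  set r := Complex.abs (E τ') with hr
  have hr0 : 0 ≤ r := AbsoluteValue.nonneg _ _
  have hr1 : r < 1 := abs_E_lt_one hτ'
  have hE := abs_E_pos z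
  apply Summable.of_norm_bounded_eventually
    (g := fun n => (2 / Complex.abs (E z) * r) * r ^ n)
    (((summable_geometric_of_lt_one hr0 hr1).mul_left _))
  rw [Nat.cofinite_eq_atTop]
  have htend : Filter.Tendsto (fun n : ℕ => r ^ (n + 1)) Filter.atTop (nhds 0) := by
    have := (tendsto_pow_atTop_nhds_zero_of_lt_one hr0 hr1).comp
      (Filter.tendsto_add_atTop_nat 1)
    simpa [Function.comp_def] using this
  filter_upwards [htend.eventually_lt_const (by positivity : (0:ℝ) < Complex.abs (E z) / 2)]
    with n hn
  have hB := normB_le τ' (n + 1) z (le_of_lt hn)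
  calc ‖c n * B τ' (n + 1) z‖ = Complex.abs (c n) * Complex.abs (B τ' (n + 1) z) := by
        simp [Complex.norm_eq_abs]
    _ ≤ 1 * (2 / Complex.abs (E z) * r ^ (n + 1)) := by
        apply mul_le_mul (hc n) hB (AbsoluteValue.nonneg _ _) zero_le_one
    _ = (2 / Complex.abs (E z) * r) * r ^ n := by ring

lemma diffA_term {τ' : ℂ} (c : ℕ → ℂ) {U : Set ℂ} (n : ℕ)
    (hden : c n ≠ 0 → ∀ z ∈ U, E z * (E τ') ^ n ≠ 1) :
    DifferentiableOn ℂ (fun z => c n * A τ' n z) U := by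
  by_cases hc0 : c n = 0
  · apply (differentiableOn_const (0:ℂ)).congr
    intro z hz
    simp [hc0]
  · have hnum : DifferentiableOn ℂ (fun z => E z * (E τ') ^ n) U :=
      (E_differentiable.differentiableOn).mul_const _
    have : DifferentiableOn ℂ (fun z => A τ' n z) U := by
      apply hnum.div (hnum.sub_const 1)
      intro z hz
      exact sub_ne_zero.mpr (hden hc0 z hz)
    exact this.const_mul _

lemma diffB_term {τ' : ℂ} (c : ℕ → ℂ) {U : Set ℂ} (n : ℕ)
    (hden : c n ≠ 0 → ∀ z ∈ U, E z ≠ (E τ') ^ (n + 1)) :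
    DifferentiableOn ℂ (fun z => c n * B τ' (n + 1) z) U := by
  by_cases hc0 : c n = 0
  · apply (differentiableOn_const (0:ℂ)).congr
    intro z hz
    simp [hc0]
  · have : DifferentiableOn ℂ (fun z => B τ' (n + 1) z) U := by
      apply (differentiableOn_const _).div
        ((E_differentiable.differentiableOn).sub_const _)
      intro z hz
      exact sub_ne_zero.mpr (hden hc0 z hz)
    exact this.const_mul _

lemma diffA_tsum {τ' : ℂ} (hτ' : 0 < τ'.im) (c : ℕ → ℂ)
    (hc : ∀ n, Complex.abs (c n) ≤ 1) {U : Set ℂ} (hU : IsOpen U)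
    {M : ℝ} (hM0 : 0 < M) (hM : ∀ z ∈ U, Complex.abs (E z) ≤ M)
    (hden : ∀ n, c n ≠ 0 → ∀ z ∈ U, E z * (E τ') ^ n ≠ 1) :
    DifferentiableOn ℂ (fun z => ∑' n, c n * A τ' n z) U := by
  set r := Complex.abs (E τ') with hrdef
  have hr0 : 0 ≤ r := AbsoluteValue.nonneg _ _
  have hr1 : r < 1 := abs_E_lt_one hτ'
  have htend : Filter.Tendsto (fun n : ℕ => M * r ^ n) Filter.atTop (nhds 0) := by
    simpa using (tendsto_pow_atTop_nhds_zero_of_lt_one hr0 hr1).const_mul M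
  obtain ⟨N, hN⟩ := Filter.eventually_atTop.mp
    (htend.eventually_lt_const (by norm_num : (0:ℝ) < 1/2))
  have hNle : M * r ^ N ≤ 1 / 2 := le_of_lt (hN N le_rfl)
  have key : ∀ (n : ℕ) (z : ℂ), z ∈ U →
      Complex.abs (E z) * r ^ (n + N) ≤ 1 / 2 := by
    intro n z hz
    have h1 : Complex.abs (E z) * r ^ (n + N) ≤ M * r ^ (n + N) := by
      apply mul_le_mul_of_nonneg_right (hM z hz) (by positivity)
    have h2 : M * r ^ (n + N) = (M * r ^ N) * r ^ n := by rw [pow_add]; ring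
    have h3 : (M * r ^ N) * r ^ n ≤ (1/2) * 1 := by
      apply mul_le_mul hNle (pow_le_one₀ hr0 (le_of_lt hr1)) (by positivity)
      norm_num
    linarith
  have hdiff : DifferentiableOn ℂ
      (fun z => (∑ i ∈ Finset.range N, c i * A τ' i z) +
        ∑' i, c (i + N) * A τ' (i + N) z) U := by
    apply DifferentiableOn.add
    · apply DifferentiableOn.fun_sum
      intro i _
      exact diffA_term c i (hden i)
    · apply differentiableOn_tsum_of_summable_norm
        (u := fun i => (2 * M * r ^ N) * r ^ i)
        (((summable_geometric_of_lt_one hr0 hr1).mul_left _))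
        (fun i => diffA_term c (i + N) (hden (i + N))) hU
      intro i w hw
      have hA := normA_le τ' (i + N) w (key i w hw)
      calc ‖c (i + N) * A τ' (i + N) w‖
          = Complex.abs (c (i + N)) * Complex.abs (A τ' (i + N) w) := by
            simp [Complex.norm_eq_abs]
        _ ≤ 1 * (2 * (Complex.abs (E w) * r ^ (i + N))) := by
            apply mul_le_mul (hc _) hA (AbsoluteValue.nonneg _ _) zero_le_one
        _ ≤ 2 * M * r ^ N * r ^ i := by
            rw [one_mul, pow_add]
            have := hM w hw
            have h0 : (0:ℝ) ≤ r ^ i := by positivity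
            have h1 : (0:ℝ) ≤ r ^ N := by positivity
            nlinarith [mul_le_mul_of_nonneg_right (hM w hw) (mul_nonneg h0 h1)]
  apply hdiff.congr
  intro z hz
  exact (Summable.sum_add_tsum_nat_add N (summableA hτ' c hc z)).symm

lemma diffB_tsum {τ' : ℂ} (hτ' : 0 < τ'.im) (c : ℕ → ℂ)
    (hc : ∀ n, Complex.abs (c n) ≤ 1) {U : Set ℂ} (hU : IsOpen U)
    {m : ℝ} (hm0 : 0 < m) (hm : ∀ z ∈ U, m ≤ Complex.abs (E z))
    (hden : ∀ n, c n ≠ 0 → ∀ z ∈ U, E z ≠ (E τ') ^ (n + 1)) :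
    DifferentiableOn ℂ (fun z => ∑' n, c n * B τ' (n + 1) z) U := by
  set r := Complex.abs (E τ') with hrdef
  have hr0 : 0 ≤ r := AbsoluteValue.nonneg _ _
  have hr1 : r < 1 := abs_E_lt_one hτ'
  have htend : Filter.Tendsto (fun n : ℕ => r ^ (n + 1)) Filter.atTop (nhds 0) := by
    have := (tendsto_pow_atTop_nhds_zero_of_lt_one hr0 hr1).comp
      (Filter.tendsto_add_atTop_nat 1)
    simpa [Function.comp_def] using this
  obtain ⟨N, hN⟩ := Filter.eventually_atTop.mp
    (htend.eventually_lt_const (by positivity : (0:ℝ) < m / 2))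
  have hNle : r ^ (N + 1) ≤ m / 2 := le_of_lt (hN N le_rfl)
  have key : ∀ (n : ℕ) (z : ℂ), z ∈ U →
      r ^ (n + N + 1) ≤ Complex.abs (E z) / 2 := by
    intro n z hz
    have h1 : r ^ (n + N + 1) ≤ r ^ (N + 1) := by
      apply pow_le_pow_of_le_one hr0 (le_of_lt hr1)
      omega
    have := hm z hz
    linarith
  have hdiff : DifferentiableOn ℂ
      (fun z => (∑ i ∈ Finset.range N, c i * B τ' (i + 1) z) +
        ∑' i, c (i + N) * B τ' (i + N + 1) z) U := by
    apply DifferentiableOn.add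
    · apply DifferentiableOn.fun_sum
      intro i _
      exact diffB_term c i (hden i)
    · apply differentiableOn_tsum_of_summable_norm
        (u := fun i => (2 / m * r ^ (N + 1)) * r ^ i)
        (((summable_geometric_of_lt_one hr0 hr1).mul_left _))
        (fun i => diffB_term c (i + N) (hden (i + N))) hU
      intro i w hw
      have hEw := abs_E_pos w
      have hB := normB_le τ' (i + N + 1) w (key i w hw)
      calc ‖c (i + N) * B τ' (i + N + 1) w‖
          = Complex.abs (c (i + N)) * Complex.abs (B τ' (i + N + 1) w) := by
            simp [Complex.norm_eq_abs]
        _ ≤ 1 * (2 / Complex.abs (E w) * r ^ (i + N + 1)) := by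
            apply mul_le_mul (hc _) hB (AbsoluteValue.nonneg _ _) zero_le_one
        _ ≤ 2 / m * r ^ (N + 1) * r ^ i := by
            rw [one_mul]
            have hmw := hm w hw
            have hr2 : r ^ (i + N + 1) = r ^ (N + 1) * r ^ i := by
              rw [← pow_add]; ring_nf
            rw [hr2]
            have h4 : 2 / Complex.abs (E w) ≤ 2 / m := by
              apply div_le_div_of_nonneg_left (by norm_num) hm0 hmw
            have h5 : (0:ℝ) ≤ r ^ (N + 1) * r ^ i := by positivity
            nlinarith
  apply hdiff.congr
  intro z hz
  exact (Summable.sum_add_tsum_nat_add N (summableB hτ' c hc z)).symm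

/-- The quasi-periodic meromorphic function. -/
def G (τ' : ℂ) (z : ℂ) : ℂ := (∑' n, A τ' n z) + (∑' n, B τ' (n + 1) z)

lemma summableA' {τ' : ℂ} (hτ' : 0 < τ'.im) (z : ℂ) : Summable (fun n => A τ' n z) := by
  have := summableA hτ' (fun _ => (1:ℂ)) (by simp) z
  simpa using this

lemma summableB' {τ' : ℂ} (hτ' : 0 < τ'.im) (z : ℂ) :
    Summable (fun n => B τ' (n + 1) z) := by
  have := summableB hτ' (fun _ => (1:ℂ)) (by simp) z
  simpa using this

lemma E_add_one (z : ℂ) : E (z + 1) = E z := by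
  rw [E_add]
  have h1 : E 1 = 1 := by simpa using E_int 1
  rw [h1, mul_one]

lemma A_add_one (τ' : ℂ) (n : ℕ) (z : ℂ) : A τ' n (z + 1) = A τ' n z := by
  rw [A, A, E_add_one]

lemma B_add_one (τ' : ℂ) (n : ℕ) (z : ℂ) : B τ' n (z + 1) = B τ' n z := by
  rw [B, B, E_add_one]

lemma G_add_one (τ' : ℂ) (z : ℂ) : G τ' (z + 1) = G τ' z := by
  rw [G, G]
  congr 1
  · exact tsum_congr fun n => A_add_one τ' n z
  · exact tsum_congr fun n => B_add_one τ' (n + 1) z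

lemma A_shift (τ' : ℂ) (n : ℕ) (z : ℂ) : A τ' n (z + τ') = A τ' (n + 1) z := by
  rw [A, A, E_add]
  have : E z * E τ' * E τ' ^ n = E z * E τ' ^ (n + 1) := by ring
  rw [this]

lemma B_shift (τ' : ℂ) (n : ℕ) (z : ℂ) : B τ' (n + 1) (z + τ') = B τ' n z := by
  rw [B, B, E_add, pow_succ]
  rw [show E z * E τ' - E τ' ^ n * E τ' = (E z - E τ' ^ n) * E τ' from by ring,
    mul_div_mul_right _ _ (E_ne_zero τ')]

lemma G_add_tau {τ' : ℂ} (hτ' : 0 < τ'.im) {z : ℂ} (hz : z ∉ lat τ') :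
    G τ' (z + τ') = G τ' z - 1 := by
  have hsA := summableA' hτ' z
  have hsB1 := summableB' hτ' z
  have hsB : Summable (fun n => B τ' n z) := (summable_nat_add_iff 1).mp hsB1
  have hA : (∑' n, A τ' n (z + τ')) = (∑' n, A τ' n z) - A τ' 0 z := by
    rw [tsum_congr (fun n => A_shift τ' n z)]
    have := Summable.tsum_eq_zero_add hsA
    rw [this]
    ring
  have hB : (∑' n, B τ' (n + 1) (z + τ')) = B τ' 0 z + ∑' n, B τ' (n + 1) z := by
    rw [tsum_congr (fun n => B_shift τ' n z)]
    exact Summable.tsum_eq_zero_add hsB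
  rw [G, G, hA, hB]
  have hE1 : E z ≠ 1 := by
    have := denomA_ne hz 0
    simpa using this
  have hAB : A τ' 0 z - B τ' 0 z = 1 := by
    rw [A, B, pow_zero, mul_one]
    rw [div_sub_div_same]
    exact div_self (sub_ne_zero.mpr hE1)
  linear_combination -hAB

lemma diffA_tsum_one {τ' : ℂ} (hτ' : 0 < τ'.im) {U : Set ℂ} (hU : IsOpen U)
    {M : ℝ} (hM0 : 0 < M) (hM : ∀ z ∈ U, Complex.abs (E z) ≤ M)
    (hden : ∀ (n : ℕ), ∀ z ∈ U, E z * (E τ') ^ n ≠ 1) :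
    DifferentiableOn ℂ (fun z => ∑' n, A τ' n z) U := by
  have := diffA_tsum hτ' (fun _ => (1:ℂ)) (by simp) hU hM0 hM (fun n _ => hden n)
  apply this.congr
  intro z hz
  simp only [one_mul]

lemma diffB_tsum_one {τ' : ℂ} (hτ' : 0 < τ'.im) {U : Set ℂ} (hU : IsOpen U)
    {m : ℝ} (hm0 : 0 < m) (hm : ∀ z ∈ U, m ≤ Complex.abs (E z))
    (hden : ∀ (n : ℕ), ∀ z ∈ U, E z ≠ (E τ') ^ (n + 1)) :
    DifferentiableOn ℂ (fun z => ∑' n, B τ' (n + 1) z) U := by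
  have := diffB_tsum hτ' (fun _ => (1:ℂ)) (by simp) hU hm0 hm (fun n _ => hden n)
  apply this.congr
  intro z hz
  simp only [one_mul]

lemma Ebound_ball (z₀ : ℂ) (R : ℝ) :
    ∀ z ∈ Metric.ball z₀ R,
      Complex.abs (E z) ≤ Real.exp (2 * Real.pi * (|z₀.im| + R)) ∧
      Real.exp (-(2 * Real.pi * (|z₀.im| + R))) ≤ Complex.abs (E z) := by
  intro z hz
  rw [Metric.mem_ball, dist_eq] at hz
  have him : |z.im - z₀.im| ≤ Complex.abs (z - z₀) := by
    have := Complex.abs_im_le_abs (z - z₀)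
    simpa using this
  have h1 : |z.im - z₀.im| < R := lt_of_le_of_lt him hz
  have h2 : |z.im| ≤ |z₀.im| + R := by
    have h3 := abs_abs_sub_abs_le_abs_sub z.im z₀.im
    have h4 := (abs_le.mp h3).2
    linarith
  have hpi := Real.pi_pos
  rw [abs_E]
  have hb := abs_le.mp h2
  constructor
  · apply Real.exp_le_exp.mpr
    nlinarith
  · apply Real.exp_le_exp.mpr
    nlinarith

lemma G_diff {τ' : ℂ} (hτ' : 0 < τ'.im) :
    DifferentiableOn ℂ (G τ') (lat τ')ᶜ := by
  have hopen : IsOpen (lat τ')ᶜ := (lat_closed hτ').isOpen_compl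
  intro z₀ hz₀
  obtain ⟨R, hR0, hRs⟩ := Metric.isOpen_iff.mp hopen z₀ hz₀
  set M := Real.exp (2 * Real.pi * (|z₀.im| + R)) with hMdef
  set m := Real.exp (-(2 * Real.pi * (|z₀.im| + R))) with hmdef
  have hdiff : DifferentiableOn ℂ (G τ') (Metric.ball z₀ R) := by
    apply DifferentiableOn.add
    · apply diffA_tsum_one hτ' Metric.isOpen_ball (Real.exp_pos _)
        (fun z hz => (Ebound_ball z₀ R z hz).1)
      intro n z hz
      exact denomA_ne (hRs hz) n
    · apply diffB_tsum_one hτ' Metric.isOpen_ball (Real.exp_pos _)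
        (fun z hz => (Ebound_ball z₀ R z hz).2)
      intro n z hz
      exact denomB_ne (hRs hz) (n + 1)
  exact (hdiff.differentiableAt (Metric.ball_mem_nhds z₀ hR0)).differentiableWithinAt

lemma G_mero {τ' : ℂ} (hτ' : 0 < τ'.im) (m k : ℤ) :
    MeromorphicAt (G τ') ((m : ℂ) + (k : ℂ) * τ') := by
  set p : ℂ := (m : ℂ) + (k : ℂ) * τ' with hpdef
  have hplat : p ∈ lat τ' := ⟨m, k, rfl⟩
  set δ := min 1 τ'.im with hδdef
  have hδ0 : 0 < δ := lt_min one_pos hτ'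
  set U := Metric.ball p δ with hUdef
  have hU : IsOpen U := Metric.isOpen_ball
  have hpU : p ∈ U := Metric.mem_ball_self hδ0
  have hpnb : U ∈ nhds p := hU.mem_nhds hpU
  have hiso : ∀ z ∈ U, z ∈ lat τ' → z = p := fun z hz hzl =>
    lat_isolated hτ' hplat hz hzl
  have hMb : ∀ z ∈ U, Complex.abs (E z) ≤ Real.exp (2 * Real.pi * (|p.im| + δ)) :=
    fun z hz => (Ebound_ball p δ z hz).1
  have hmb : ∀ z ∈ U, Real.exp (-(2 * Real.pi * (|p.im| + δ))) ≤ Complex.abs (E z) :=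
    fun z hz => (Ebound_ball p δ z hz).2
  rcases le_or_gt k 0 with hk | hk
  · -- bad term in the A series
    set n₀ : ℕ := (-k).toNat with hn₀def
    have hn₀ : (n₀ : ℤ) = -k := Int.toNat_of_nonneg (by omega)
    set cA : ℕ → ℂ := fun n => if n = n₀ then 0 else 1 with hcAdef
    have hcA : ∀ n, Complex.abs (cA n) ≤ 1 := by
      intro n; by_cases h : n = n₀ <;> simp [cA, h]
    have hdenA : ∀ n, cA n ≠ 0 → ∀ z ∈ U, E z * (E τ') ^ n ≠ 1 := by
      intro n hn z hz
      have hnn : n ≠ n₀ := by intro h; apply hn; simp [cA, h]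
      by_cases hzl : z ∈ lat τ'
      · rw [hiso z hz hzl, hpdef]
        exact denomA_at hτ' m k n (by omega)
      · exact denomA_ne hzl n
    have hdenB : ∀ (n : ℕ), ∀ z ∈ U, E z ≠ (E τ') ^ (n + 1) := by
      intro n z hz
      by_cases hzl : z ∈ lat τ'
      · rw [hiso z hz hzl, hpdef]
        exact denomB_at hτ' m k (n + 1) (by push_cast; omega)
      · exact denomB_ne hzl (n + 1)
    have hF1 : AnalyticAt ℂ (fun z => ∑' n, cA n * A τ' n z) p :=
      (diffA_tsum hτ' cA hcA hU (Real.exp_pos _) hMb hdenA).analyticAt hpnb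
    have hF2 : AnalyticAt ℂ (fun z => ∑' n, B τ' (n + 1) z) p :=
      (diffB_tsum_one hτ' hU (Real.exp_pos _) hmb hdenB).analyticAt hpnb
    have hbad : MeromorphicAt
        (fun z => E z * (E τ') ^ n₀ / (E z * (E τ') ^ n₀ - 1)) p := by
      have hnum : AnalyticAt ℂ (fun z => E z * (E τ') ^ n₀) p :=
        (E_differentiable.mul_const _).analyticAt p
      have hden : AnalyticAt ℂ (fun z => E z * (E τ') ^ n₀ - 1) p :=
        hnum.sub analyticAt_const
      exact hnum.meromorphicAt.div hden.meromorphicAt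
    have hGeq : G τ' = fun z =>
        (E z * (E τ') ^ n₀ / (E z * (E τ') ^ n₀ - 1)) +
          ((∑' n, cA n * A τ' n z) + (∑' n, B τ' (n + 1) z)) := by
      funext z
      rw [G]
      have h1 : (∑' n, A τ' n z) = A τ' n₀ z + ∑' n, cA n * A τ' n z := by
        rw [Summable.tsum_eq_add_tsum_ite (summableA' hτ' z) n₀]
        congr 1
        apply tsum_congr
        intro n
        by_cases h : n = n₀ <;> simp [cA, h]
      rw [h1]
      simp only [A]
      ring
    rw [hGeq]
    exact hbad.add (hF1.meromorphicAt.add hF2.meromorphicAt)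
  · -- bad term in the B series
    set n₁ : ℕ := (k - 1).toNat with hn₁def
    have hn₁ : (n₁ : ℤ) = k - 1 := Int.toNat_of_nonneg (by omega)
    set cB : ℕ → ℂ := fun n => if n = n₁ then 0 else 1 with hcBdef
    have hcB : ∀ n, Complex.abs (cB n) ≤ 1 := by
      intro n; by_cases h : n = n₁ <;> simp [cB, h]
    have hdenA : ∀ (n : ℕ), ∀ z ∈ U, E z * (E τ') ^ n ≠ 1 := by
      intro n z hz
      by_cases hzl : z ∈ lat τ'
      · rw [hiso z hz hzl, hpdef]
        exact denomA_at hτ' m k n (by omega)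
      · exact denomA_ne hzl n
    have hdenB : ∀ n, cB n ≠ 0 → ∀ z ∈ U, E z ≠ (E τ') ^ (n + 1) := by
      intro n hn z hz
      have hnn : n ≠ n₁ := by intro h; apply hn; simp [cB, h]
      by_cases hzl : z ∈ lat τ'
      · rw [hiso z hz hzl, hpdef]
        exact denomB_at hτ' m k (n + 1) (by push_cast; omega)
      · exact denomB_ne hzl (n + 1)
    have hF1 : AnalyticAt ℂ (fun z => ∑' n, A τ' n z) p :=
      (diffA_tsum_one hτ' hU (Real.exp_pos _) hMb hdenA).analyticAt hpnb
    have hF2 : AnalyticAt ℂ (fun z => ∑' n, cB n * B τ' (n + 1) z) p :=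
      (diffB_tsum hτ' cB hcB hU (Real.exp_pos _) hmb hdenB).analyticAt hpnb
    have hbad : MeromorphicAt
        (fun z => (E τ') ^ (n₁ + 1) / (E z - (E τ') ^ (n₁ + 1))) p := by
      have hden : AnalyticAt ℂ (fun z => E z - (E τ') ^ (n₁ + 1)) p :=
        (E_differentiable.analyticAt p).sub analyticAt_const
      exact (MeromorphicAt.const _ p).div hden.meromorphicAt
    have hGeq : G τ' = fun z =>
        ((E τ') ^ (n₁ + 1) / (E z - (E τ') ^ (n₁ + 1))) +
          ((∑' n, A τ' n z) + (∑' n, cB n * B τ' (n + 1) z)) := by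
      funext z
      rw [G]
      have h1 : (∑' n, B τ' (n + 1) z) = B τ' (n₁ + 1) z + ∑' n, cB n * B τ' (n + 1) z := by
        rw [Summable.tsum_eq_add_tsum_ite (summableB' hτ' z) n₁]
        congr 1
        apply tsum_congr
        intro n
        by_cases h : n = n₁ <;> simp [cB, h]
      rw [h1]
      simp only [B]
      ring
    rw [hGeq]
    exact hbad.add (hF1.meromorphicAt.add hF2.meromorphicAt)

end
end Stmt2Aux

open Stmt2Aux in
/-- For the lattice `Λ' = ℤ + ℤτ'` (`Im τ' > 0`) and any `a b : ℂ` there is a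
function `h`, holomorphic off `Λ'` and meromorphic at each lattice point, with
`h (z + 1) = h z + a` and `h (z + τ') = h z + b`. -/
theorem stmt_2 (τ' : ℂ) (hτ' : 0 < τ'.im)
    (Λ : Set ℂ) (hΛ : Λ = {z : ℂ | ∃ m n : ℤ, z = (m : ℂ) + (n : ℂ) * τ'})
    (a b : ℂ) :
    ∃ h : ℂ → ℂ,
      DifferentiableOn ℂ h Λᶜ ∧
      (∀ p ∈ Λ, MeromorphicAt h p) ∧
      (∀ z : ℂ, z ∉ Λ → h (z + 1) = h z + a ∧ h (z + τ') = h z + b) := by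
  have hlat : Λ = lat τ' := hΛ
  refine ⟨fun z => a * z + (a * τ' - b) * G τ' z, ?_, ?_, ?_⟩
  · rw [hlat]
    apply DifferentiableOn.add
    · exact (differentiable_id.const_mul a).differentiableOn
    · exact (G_diff hτ').const_mul _
  · intro p hp
    rw [hlat] at hp
    obtain ⟨m, k, rfl⟩ := hp
    apply MeromorphicAt.add
    · exact ((differentiable_id.const_mul a).analyticAt _).meromorphicAt
    · exact (MeromorphicAt.const _ _).mul (G_mero hτ' m k)
  · intro z hz
    rw [hlat] at hz
    constructor
    · simp only
      rw [G_add_one]; ring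
    · simp only
      rw [G_add_tau hτ' hz]; ring
end

section
/- Let τ' be a complex number with positive imaginary part, Λ' = {m + n·τ' : m, n ∈ ℤ} the associated lattice, and fix a meromorphic function Z on ℂ such that δ_{λ'}(Z)(z) = conj(λ') for every λ' ∈ Λ' and every z off the poles of Z. Suppose g₁₁, g₁₂, g₂₁, g₂₂, f₁₂ are meromorphic functions on ℂ satisfying, for every λ' ∈ Λ' and all z off their poles: δ_{λ'}(g₁₂) = 0; δ_{λ'}(g_{ii}) = (−1)^{i+1}·conj(λ')·g₁₂ for i = 1, 2; δ_{λ'}(f₁₂) = −conj(λ')·g₁₂; δ_{λ'}(g₂₁)(z) = conj(λ')·(g₂₂ − g₁₁)(z) − conj(λ')²·g₁₂(z); and suppose g₁₂ is not identically zero. Then g₁₂ is Λ'-elliptic, and there exist Λ'-elliptic meromorphic functions e₁₁, e₂₂, e₁₂, e₂₁ such that g_{ii} = ((−1)^{i+1}·Z + e_{ii})·g₁₂ for i = 1, 2, f₁₂ = (−Z + e₁₂)·g₁₂, and g₂₁ = (−Z² + (e₂₂ − e₁₁)·Z + e₂₁)·g₁₂. -/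
open Complex ComplexConjugate

/-- A meromorphic function on `ℂ`: a function together with a closed discrete
pole set, holomorphic off the poles and meromorphic at each pole. -/
structure MeroOn where
  toFun : ℂ → ℂ
  poles : Set ℂ
  poles_closed : IsClosed poles
  poles_discrete : DiscreteTopology poles
  diffOn : DifferentiableOn ℂ toFun polesᶜ
  merom : ∀ p ∈ poles, MeromorphicAt toFun p

/-- `h` is `Λ`-elliptic: all the differences `δ_{λ'}(h)` vanish (off poles). -/
def IsElliptic (Λ : Set ℂ) (h : MeroOn) : Prop :=
  ∀ l ∈ Λ, ∀ z : ℂ, z ∉ h.poles → z + l ∉ h.poles → h.toFun (z + l) = h.toFun z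

lemma MeroOn.mero (h : MeroOn) (p : ℂ) : MeromorphicAt h.toFun p := by
  by_cases hp : p ∈ h.poles
  · exact h.merom p hp
  · exact (h.diffOn.analyticAt (h.poles_closed.isOpen_compl.mem_nhds hp)).meromorphicAt

lemma MeroOn.eventually_off (h : MeroOn) (z : ℂ) : ∀ᶠ w in nhdsWithin z {z}ᶜ, w ∉ h.poles := by
  have hd := (isClosed_and_discrete_iff.mp ⟨h.poles_closed, ⟨h.poles_discrete⟩⟩) z
  exact Filter.disjoint_principal_right.mp hd

/-- The "form I" case (`g₁₂ ≠ 0`) of the classification of solutions of the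
invariance equations for meromorphic affine connections on primary Kodaira
surfaces. -/
theorem stmt_3 (τ' : ℂ) (hτ' : 0 < τ'.im)
    (Λ : Set ℂ) (hΛ : Λ = {z : ℂ | ∃ m n : ℤ, z = (m : ℂ) + (n : ℂ) * τ'})
    (Z g₁₁ g₁₂ g₂₁ g₂₂ f₁₂ : MeroOn)
    (hZ : ∀ l ∈ Λ, ∀ z : ℂ, z ∉ Z.poles → z + l ∉ Z.poles →
      Z.toFun (z + l) - Z.toFun z = conj l)
    (h1 : ∀ l ∈ Λ, ∀ z : ℂ, z ∉ g₁₂.poles → z + l ∉ g₁₂.poles →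
      g₁₂.toFun (z + l) - g₁₂.toFun z = 0)
    (h2 : ∀ l ∈ Λ, ∀ z : ℂ, z ∉ g₁₁.poles → z + l ∉ g₁₁.poles → z ∉ g₁₂.poles →
      g₁₁.toFun (z + l) - g₁₁.toFun z = conj l * g₁₂.toFun z)
    (h3 : ∀ l ∈ Λ, ∀ z : ℂ, z ∉ g₂₂.poles → z + l ∉ g₂₂.poles → z ∉ g₁₂.poles →
      g₂₂.toFun (z + l) - g₂₂.toFun z = -conj l * g₁₂.toFun z)
    (h4 : ∀ l ∈ Λ, ∀ z : ℂ, z ∉ f₁₂.poles → z + l ∉ f₁₂.poles → z ∉ g₁₂.poles →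
      f₁₂.toFun (z + l) - f₁₂.toFun z = -conj l * g₁₂.toFun z)
    (h5 : ∀ l ∈ Λ, ∀ z : ℂ, z ∉ g₂₁.poles → z + l ∉ g₂₁.poles →
      z ∉ g₁₁.poles → z ∉ g₂₂.poles → z ∉ g₁₂.poles →
      g₂₁.toFun (z + l) - g₂₁.toFun z =
        conj l * (g₂₂.toFun z - g₁₁.toFun z) - (conj l) ^ 2 * g₁₂.toFun z)
    (hne : ∃ z : ℂ, z ∉ g₁₂.poles ∧ g₁₂.toFun z ≠ 0) :
    IsElliptic Λ g₁₂ ∧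
    ∃ e₁₁ e₂₂ e₁₂ e₂₁ : MeroOn,
      IsElliptic Λ e₁₁ ∧ IsElliptic Λ e₂₂ ∧ IsElliptic Λ e₁₂ ∧ IsElliptic Λ e₂₁ ∧
      (∀ z : ℂ, z ∉ g₁₁.poles → z ∉ Z.poles → z ∉ e₁₁.poles → z ∉ g₁₂.poles →
        g₁₁.toFun z = (Z.toFun z + e₁₁.toFun z) * g₁₂.toFun z) ∧
      (∀ z : ℂ, z ∉ g₂₂.poles → z ∉ Z.poles → z ∉ e₂₂.poles → z ∉ g₁₂.poles →
        g₂₂.toFun z = (-Z.toFun z + e₂₂.toFun z) * g₁₂.toFun z) ∧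
      (∀ z : ℂ, z ∉ f₁₂.poles → z ∉ Z.poles → z ∉ e₁₂.poles → z ∉ g₁₂.poles →
        f₁₂.toFun z = (-Z.toFun z + e₁₂.toFun z) * g₁₂.toFun z) ∧
      (∀ z : ℂ, z ∉ g₂₁.poles → z ∉ Z.poles → z ∉ e₁₁.poles → z ∉ e₂₂.poles →
        z ∉ e₂₁.poles → z ∉ g₁₂.poles →
        g₂₁.toFun z = (-(Z.toFun z) ^ 2 + (e₂₂.toFun z - e₁₁.toFun z) * Z.toFun z
          + e₂₁.toFun z) * g₁₂.toFun z) := by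
  classical
  obtain ⟨z₀, hz₀p, hz₀⟩ := hne
  -- analyticity of g₁₂ off its poles
  have hA : AnalyticOnNhd ℂ g₁₂.toFun g₁₂.polesᶜ :=
    g₁₂.diffOn.analyticOnNhd g₁₂.poles_closed.isOpen_compl
  -- the complement of the poles of g₁₂ is preconnected
  have hcnt : g₁₂.poles.Countable :=
    (HereditarilyLindelof_LindelofSets g₁₂.poles).countable g₁₂.poles_discrete
  have hconn : IsPreconnected g₁₂.polesᶜ := by
    refine (hcnt.isPathConnected_compl_of_one_lt_rank ?_).isConnected.isPreconnected
    rw [rank_real_complex]; norm_num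
  -- g₁₂ is eventually nonzero near every point
  have hnz : ∀ z : ℂ, ∀ᶠ w in nhdsWithin z {z}ᶜ, g₁₂.toFun w ≠ 0 := by
    intro z
    have hm : MeromorphicAt g₁₂.toFun z := g₁₂.mero z
    rcases eq_or_ne (meromorphicOrderAt g₁₂.toFun z) ⊤ with htop | htop
    · exfalso
      have hev : ∀ᶠ w in nhdsWithin z {z}ᶜ, g₁₂.toFun w = 0 ∧ w ∉ g₁₂.poles :=
        ((meromorphicOrderAt_eq_top_iff).mp htop).and (g₁₂.eventually_off z)
      rw [eventually_nhdsWithin_iff] at hev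
      obtain ⟨t, hP, hto, htz⟩ := eventually_nhds_iff.mp hev
      have hUmem : t ∩ {z}ᶜ ∈ nhdsWithin z {z}ᶜ :=
        Filter.inter_mem (mem_nhdsWithin_of_mem_nhds (hto.mem_nhds htz)) self_mem_nhdsWithin
      obtain ⟨w₀, hw₀t, hw₀ne⟩ := Filter.nonempty_of_mem hUmem
      have hw₀ := hP w₀ hw₀t hw₀ne
      have hEq : g₁₂.toFun =ᶠ[nhds w₀] 0 :=
        eventually_nhds_iff.mpr ⟨t ∩ {z}ᶜ, fun w hw => (hP w hw.1 hw.2).1,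
          hto.inter isOpen_compl_singleton, ⟨hw₀t, hw₀ne⟩⟩
      exact hz₀ (hA.eqOn_zero_of_preconnected_of_eventuallyEq_zero hconn hw₀.2 hEq hz₀p)
    · obtain ⟨n, hn⟩ := WithTop.ne_top_iff_exists.mp htop
      obtain ⟨g, hg_an, hg_ne, hg_eq⟩ := (meromorphicOrderAt_eq_int_iff hm).mp hn.symm
      have hgnz : ∀ᶠ w in nhdsWithin z {z}ᶜ, g w ≠ 0 :=
        (hg_an.continuousAt.eventually_ne hg_ne).filter_mono nhdsWithin_le_nhds
      filter_upwards [hg_eq, hgnz, self_mem_nhdsWithin] with w hw1 hw2 hw3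
      rw [hw1]
      exact smul_ne_zero (zpow_ne_zero _ (sub_ne_zero.mpr hw3)) hw2
  -- the common pole set of the elliptic factors
  set S : Set ℂ := Z.poles ∪ g₁₁.poles ∪ g₁₂.poles ∪ g₂₁.poles ∪ g₂₂.poles ∪ f₁₂.poles ∪
      {w : ℂ | g₁₂.toFun w = 0} with hSdef
  have hSdisj : ∀ z : ℂ, Disjoint (nhdsWithin z {z}ᶜ) (Filter.principal S) := by
    intro z
    rw [Filter.disjoint_principal_right]
    filter_upwards [Z.eventually_off z, g₁₁.eventually_off z, g₁₂.eventually_off z,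
      g₂₁.eventually_off z, g₂₂.eventually_off z, f₁₂.eventually_off z, hnz z]
      with w w1 w2 w3 w4 w5 w6 w7
    simp only [hSdef, Set.mem_compl_iff, Set.mem_union, Set.mem_setOf_eq]
    tauto
  obtain ⟨hSc, ⟨hSd⟩⟩ := isClosed_and_discrete_iff.mpr hSdisj
  have hS : ∀ w : ℂ, w ∉ S → w ∉ Z.poles ∧ w ∉ g₁₁.poles ∧ w ∉ g₁₂.poles ∧ w ∉ g₂₁.poles ∧
      w ∉ g₂₂.poles ∧ w ∉ f₁₂.poles ∧ g₁₂.toFun w ≠ 0 := by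
    intro w hw
    simp only [hSdef, Set.mem_union, Set.mem_setOf_eq] at hw
    push_neg at hw
    tauto
  -- differentiability on Sᶜ
  have hsc : ∀ w ∈ Sᶜ, w ∉ S := fun w hw => hw
  have dZ : DifferentiableOn ℂ Z.toFun Sᶜ := Z.diffOn.mono fun w hw => (hS w hw).1
  have d11 : DifferentiableOn ℂ g₁₁.toFun Sᶜ := g₁₁.diffOn.mono fun w hw => (hS w hw).2.1
  have d12 : DifferentiableOn ℂ g₁₂.toFun Sᶜ := g₁₂.diffOn.mono fun w hw => (hS w hw).2.2.1
  have d21 : DifferentiableOn ℂ g₂₁.toFun Sᶜ := g₂₁.diffOn.mono fun w hw => (hS w hw).2.2.2.1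
  have d22 : DifferentiableOn ℂ g₂₂.toFun Sᶜ := g₂₂.diffOn.mono fun w hw => (hS w hw).2.2.2.2.1
  have dF : DifferentiableOn ℂ f₁₂.toFun Sᶜ := f₁₂.diffOn.mono fun w hw => (hS w hw).2.2.2.2.2.1
  have nz : ∀ w ∈ Sᶜ, g₁₂.toFun w ≠ 0 := fun w hw => (hS w hw).2.2.2.2.2.2
  -- the four elliptic coefficient functions
  refine ⟨fun l hl z hz hzl => sub_eq_zero.mp (h1 l hl z hz hzl),
    ⟨fun z => g₁₁.toFun z / g₁₂.toFun z - Z.toFun z, S, hSc, hSd,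
      (d11.div d12 nz).sub dZ,
      fun p _ => ((g₁₁.mero p).div (g₁₂.mero p)).sub (Z.mero p)⟩,
    ⟨fun z => g₂₂.toFun z / g₁₂.toFun z + Z.toFun z, S, hSc, hSd,
      (d22.div d12 nz).add dZ,
      fun p _ => ((g₂₂.mero p).div (g₁₂.mero p)).add (Z.mero p)⟩,
    ⟨fun z => f₁₂.toFun z / g₁₂.toFun z + Z.toFun z, S, hSc, hSd,
      (dF.div d12 nz).add dZ,
      fun p _ => ((f₁₂.mero p).div (g₁₂.mero p)).add (Z.mero p)⟩,
    ⟨fun z => g₂₁.toFun z / g₁₂.toFun z - Z.toFun z ^ 2 -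
        Z.toFun z * (g₂₂.toFun z - g₁₁.toFun z) / g₁₂.toFun z, S, hSc, hSd,
      ((d21.div d12 nz).sub (dZ.pow 2)).sub ((dZ.mul (d22.sub d11)).div d12 nz),
      fun p _ => (((g₂₁.mero p).div (g₁₂.mero p)).sub ((Z.mero p).pow 2)).sub
        (((Z.mero p).mul ((g₂₂.mero p).sub (g₁₁.mero p))).div (g₁₂.mero p))⟩,
    ?_, ?_, ?_, ?_, ?_, ?_, ?_, ?_⟩
  · intro l hl z hz hzl
    dsimp only
    obtain ⟨a1, a2, a3, -, -, -, a7⟩ := hS z hz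
    obtain ⟨b1, b2, b3, -, -, -, -⟩ := hS (z + l) hzl
    have e12 : g₁₂.toFun (z + l) = g₁₂.toFun z := sub_eq_zero.mp (h1 l hl z a3 b3)
    have e11 : g₁₁.toFun (z + l) = g₁₁.toFun z + conj l * g₁₂.toFun z := by
      have := h2 l hl z a2 b2 a3; linear_combination this
    have eZ : Z.toFun (z + l) = Z.toFun z + conj l := by
      have := hZ l hl z a1 b1; linear_combination this
    rw [e12, e11, eZ]
    field_simp
    ring
  · intro l hl z hz hzl
    dsimp only
    obtain ⟨a1, -, a3, -, a5, -, a7⟩ := hS z hz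
    obtain ⟨b1, -, b3, -, b5, -, -⟩ := hS (z + l) hzl
    have e12 : g₁₂.toFun (z + l) = g₁₂.toFun z := sub_eq_zero.mp (h1 l hl z a3 b3)
    have e22 : g₂₂.toFun (z + l) = g₂₂.toFun z - conj l * g₁₂.toFun z := by
      have := h3 l hl z a5 b5 a3; linear_combination this
    have eZ : Z.toFun (z + l) = Z.toFun z + conj l := by
      have := hZ l hl z a1 b1; linear_combination this
    rw [e12, e22, eZ]
    field_simp
    ring
  · intro l hl z hz hzl
    dsimp only
    obtain ⟨a1, -, a3, -, -, a6, a7⟩ := hS z hz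
    obtain ⟨b1, -, b3, -, -, b6, -⟩ := hS (z + l) hzl
    have e12 : g₁₂.toFun (z + l) = g₁₂.toFun z := sub_eq_zero.mp (h1 l hl z a3 b3)
    have eF : f₁₂.toFun (z + l) = f₁₂.toFun z - conj l * g₁₂.toFun z := by
      have := h4 l hl z a6 b6 a3; linear_combination this
    have eZ : Z.toFun (z + l) = Z.toFun z + conj l := by
      have := hZ l hl z a1 b1; linear_combination this
    rw [e12, eF, eZ]
    field_simp
    ring
  · intro l hl z hz hzl
    dsimp only
    obtain ⟨a1, a2, a3, a4, a5, -, a7⟩ := hS z hz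
    obtain ⟨b1, b2, b3, b4, b5, -, -⟩ := hS (z + l) hzl
    have e12 : g₁₂.toFun (z + l) = g₁₂.toFun z := sub_eq_zero.mp (h1 l hl z a3 b3)
    have e11 : g₁₁.toFun (z + l) = g₁₁.toFun z + conj l * g₁₂.toFun z := by
      have := h2 l hl z a2 b2 a3; linear_combination this
    have e22 : g₂₂.toFun (z + l) = g₂₂.toFun z - conj l * g₁₂.toFun z := by
      have := h3 l hl z a5 b5 a3; linear_combination this
    have e21 : g₂₁.toFun (z + l) = g₂₁.toFun z + conj l * (g₂₂.toFun z - g₁₁.toFun z) -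
        (conj l) ^ 2 * g₁₂.toFun z := by
      have := h5 l hl z a4 b4 a2 a5 a3; linear_combination this
    have eZ : Z.toFun (z + l) = Z.toFun z + conj l := by
      have := hZ l hl z a1 b1; linear_combination this
    rw [e12, e11, e22, e21, eZ]
    field_simp
    ring
  · intro z _ _ hz _
    dsimp only
    have h7 := (hS z hz).2.2.2.2.2.2
    field_simp
    try ring
  · intro z _ _ hz _
    dsimp only
    have h7 := (hS z hz).2.2.2.2.2.2
    field_simp
    try ring
  · intro z _ _ hz _
    dsimp only
    have h7 := (hS z hz).2.2.2.2.2.2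
    field_simp
    try ring
  · intro z _ _ hz _ _ _
    dsimp only
    have h7 := (hS z hz).2.2.2.2.2.2
    field_simp
    try ring
end

section
/- Let τ' be a complex number with positive imaginary part, Λ' = {m + n·τ' : m, n ∈ ℤ} the associated lattice, and fix a meromorphic function Z on ℂ such that δ_{λ'}(Z)(z) = conj(λ') for every λ' ∈ Λ' and every z off the poles of Z. Suppose g₁₁, g₂₂, g₂₁, f₁₁, f₁₂, f₂₂ are meromorphic functions on ℂ satisfying, for every λ' ∈ Λ' and all z off their poles: δ_{λ'}(g₁₁) = δ_{λ'}(g₂₂) = δ_{λ'}(f₁₂) = 0; δ_{λ'}(g₂₁)(z) = conj(λ')·(g₂₂ − g₁₁)(z); δ_{λ'}(f_{ii})(z) = (−1)^{i+1}·conj(λ')·f₁₂(z) − conj(λ')·g_{ii}(z) for i = 1, 2. Then g₁₁, g₂₂ and f₁₂ are Λ'-elliptic, and there exist Λ'-elliptic meromorphic functions e₂₁, e₁₁, e₂₂ such that g₂₁ = (g₂₂ − g₁₁)·Z + e₂₁ and f_{ii} = ((−1)^{i+1}·f₁₂ − g_{ii})·Z + e_{ii} for i = 1, 2. -/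
open Complex ComplexConjugate

/-!
Each inhomogeneous equation has the shape `δ_l(a) = conj l · b` with `b` elliptic. Since
`δ_l(Z) = conj l`, also `δ_l(b · Z) = conj l · b`, so `e := a - b · Z` is elliptic and
`a = b · Z + e`. Meromorphic functions are closed under `-`, `·` and negation, with the union of
the pole sets as new pole set, so `e` is again meromorphic.
-/

namespace MeroOn

theorem meromorphicAt (h : MeroOn) (p : ℂ) : MeromorphicAt h.toFun p := by
  by_cases hp : p ∈ h.poles
  · exact h.merom p hp
  · exact (h.diffOn.analyticAt (h.poles_closed.isOpen_compl.mem_nhds hp)).meromorphicAt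

theorem diffOn_compl_union_left (a : MeroOn) (B : Set ℂ) :
    DifferentiableOn ℂ a.toFun (a.poles ∪ B)ᶜ :=
  a.diffOn.mono (Set.compl_subset_compl.mpr Set.subset_union_left)

theorem diffOn_compl_union_right (a : MeroOn) (A : Set ℂ) :
    DifferentiableOn ℂ a.toFun (A ∪ a.poles)ᶜ :=
  a.diffOn.mono (Set.compl_subset_compl.mpr Set.subset_union_right)

theorem discreteTopology_poles_union (a b : MeroOn) : DiscreteTopology ↥(a.poles ∪ b.poles) :=
  isDiscrete_iff_discreteTopology.mp <|
    (isDiscrete_iff_discreteTopology.mpr a.poles_discrete).union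
      (isDiscrete_iff_discreteTopology.mpr b.poles_discrete) a.poles_closed b.poles_closed

instance : Neg MeroOn where
  neg a :=
    { toFun := fun z => -a.toFun z
      poles := a.poles
      poles_closed := a.poles_closed
      poles_discrete := a.poles_discrete
      diffOn := a.diffOn.neg
      merom := fun p _ => (a.meromorphicAt p).neg }

instance : Sub MeroOn where
  sub a b :=
    { toFun := fun z => a.toFun z - b.toFun z
      poles := a.poles ∪ b.poles
      poles_closed := a.poles_closed.union b.poles_closed
      poles_discrete := a.discreteTopology_poles_union b
      diffOn := (a.diffOn_compl_union_left b.poles).sub (b.diffOn_compl_union_right a.poles)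
      merom := fun p _ => (a.meromorphicAt p).sub (b.meromorphicAt p) }

instance : Mul MeroOn where
  mul a b :=
    { toFun := fun z => a.toFun z * b.toFun z
      poles := a.poles ∪ b.poles
      poles_closed := a.poles_closed.union b.poles_closed
      poles_discrete := a.discreteTopology_poles_union b
      diffOn := (a.diffOn_compl_union_left b.poles).mul (b.diffOn_compl_union_right a.poles)
      merom := fun p _ => (a.meromorphicAt p).mul (b.meromorphicAt p) }

variable (a b : MeroOn) (z : ℂ)

@[simp] theorem toFun_neg : (-a).toFun z = -a.toFun z := rfl
@[simp] theorem toFun_sub : (a - b).toFun z = a.toFun z - b.toFun z := rfl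
@[simp] theorem toFun_mul : (a * b).toFun z = a.toFun z * b.toFun z := rfl
@[simp] theorem poles_neg : (-a).poles = a.poles := rfl
@[simp] theorem poles_sub : (a - b).poles = a.poles ∪ b.poles := rfl
@[simp] theorem poles_mul : (a * b).poles = a.poles ∪ b.poles := rfl

end MeroOn

section IsElliptic

variable {Λ : Set ℂ} {a b Z : MeroOn}

theorem isElliptic_of_sub_eq_zero
    (h : ∀ l ∈ Λ, ∀ z : ℂ, z ∉ a.poles → z + l ∉ a.poles → a.toFun (z + l) - a.toFun z = 0) :
    IsElliptic Λ a :=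
  fun l hl z hz hzl => sub_eq_zero.mp (h l hl z hz hzl)

theorem IsElliptic.neg (ha : IsElliptic Λ a) : IsElliptic Λ (-a) := by
  intro l hl z hz hzl
  simp only [MeroOn.poles_neg, MeroOn.toFun_neg] at *
  rw [ha l hl z hz hzl]

theorem IsElliptic.sub (ha : IsElliptic Λ a) (hb : IsElliptic Λ b) : IsElliptic Λ (a - b) := by
  intro l hl z hz hzl
  simp only [MeroOn.poles_sub, MeroOn.toFun_sub, Set.mem_union, not_or] at *
  rw [ha l hl z hz.1 hzl.1, hb l hl z hz.2 hzl.2]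

theorem IsElliptic.sub_mul_of_sub_eq_conj_mul (hb : IsElliptic Λ b)
    (hZ : ∀ l ∈ Λ, ∀ z : ℂ, z ∉ Z.poles → z + l ∉ Z.poles →
      Z.toFun (z + l) - Z.toFun z = conj l)
    (ha : ∀ l ∈ Λ, ∀ z : ℂ, z ∉ a.poles → z + l ∉ a.poles → z ∉ b.poles →
      a.toFun (z + l) - a.toFun z = conj l * b.toFun z) :
    IsElliptic Λ (a - b * Z) := by
  intro l hl z hz hzl
  simp only [MeroOn.poles_sub, MeroOn.poles_mul, MeroOn.toFun_sub, MeroOn.toFun_mul,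
    Set.mem_union, not_or] at *
  rw [hb l hl z hz.2.1 hzl.2.1, eq_add_of_sub_eq (hZ l hl z hz.2.2 hzl.2.2)]
  linear_combination ha l hl z hz.1 hzl.1 hz.2.1

end IsElliptic

theorem stmt_4_general
    (Λ : Set ℂ)
    (Z g₁₁ g₂₂ g₂₁ f₁₁ f₁₂ f₂₂ : MeroOn)
    (hZ : ∀ l ∈ Λ, ∀ z : ℂ, z ∉ Z.poles → z + l ∉ Z.poles →
      Z.toFun (z + l) - Z.toFun z = conj l)
    (h1 : ∀ l ∈ Λ, ∀ z : ℂ, z ∉ g₁₁.poles → z + l ∉ g₁₁.poles →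
      g₁₁.toFun (z + l) - g₁₁.toFun z = 0)
    (h2 : ∀ l ∈ Λ, ∀ z : ℂ, z ∉ g₂₂.poles → z + l ∉ g₂₂.poles →
      g₂₂.toFun (z + l) - g₂₂.toFun z = 0)
    (h3 : ∀ l ∈ Λ, ∀ z : ℂ, z ∉ f₁₂.poles → z + l ∉ f₁₂.poles →
      f₁₂.toFun (z + l) - f₁₂.toFun z = 0)
    (h4 : ∀ l ∈ Λ, ∀ z : ℂ, z ∉ g₂₁.poles → z + l ∉ g₂₁.poles →
      z ∉ g₁₁.poles → z ∉ g₂₂.poles →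
      g₂₁.toFun (z + l) - g₂₁.toFun z = conj l * (g₂₂.toFun z - g₁₁.toFun z))
    (h5 : ∀ l ∈ Λ, ∀ z : ℂ, z ∉ f₁₁.poles → z + l ∉ f₁₁.poles →
      z ∉ f₁₂.poles → z ∉ g₁₁.poles →
      f₁₁.toFun (z + l) - f₁₁.toFun z = conj l * f₁₂.toFun z - conj l * g₁₁.toFun z)
    (h6 : ∀ l ∈ Λ, ∀ z : ℂ, z ∉ f₂₂.poles → z + l ∉ f₂₂.poles →
      z ∉ f₁₂.poles → z ∉ g₂₂.poles →
      f₂₂.toFun (z + l) - f₂₂.toFun z = -conj l * f₁₂.toFun z - conj l * g₂₂.toFun z) :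
    IsElliptic Λ g₁₁ ∧ IsElliptic Λ g₂₂ ∧ IsElliptic Λ f₁₂ ∧
    ∃ e₂₁ e₁₁ e₂₂ : MeroOn,
      IsElliptic Λ e₂₁ ∧ IsElliptic Λ e₁₁ ∧ IsElliptic Λ e₂₂ ∧
      (∀ z : ℂ, z ∉ g₂₁.poles → z ∉ g₁₁.poles → z ∉ g₂₂.poles → z ∉ Z.poles →
        z ∉ e₂₁.poles →
        g₂₁.toFun z = (g₂₂.toFun z - g₁₁.toFun z) * Z.toFun z + e₂₁.toFun z) ∧
      (∀ z : ℂ, z ∉ f₁₁.poles → z ∉ f₁₂.poles → z ∉ g₁₁.poles → z ∉ Z.poles →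
        z ∉ e₁₁.poles →
        f₁₁.toFun z = (f₁₂.toFun z - g₁₁.toFun z) * Z.toFun z + e₁₁.toFun z) ∧
      (∀ z : ℂ, z ∉ f₂₂.poles → z ∉ f₁₂.poles → z ∉ g₂₂.poles → z ∉ Z.poles →
        z ∉ e₂₂.poles →
        f₂₂.toFun z = (-f₁₂.toFun z - g₂₂.toFun z) * Z.toFun z + e₂₂.toFun z) := by
  have hg₁₁ : IsElliptic Λ g₁₁ := isElliptic_of_sub_eq_zero h1
  have hg₂₂ : IsElliptic Λ g₂₂ := isElliptic_of_sub_eq_zero h2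
  have hf₁₂ : IsElliptic Λ f₁₂ := isElliptic_of_sub_eq_zero h3
  refine ⟨hg₁₁, hg₂₂, hf₁₂, g₂₁ - (g₂₂ - g₁₁) * Z, f₁₁ - (f₁₂ - g₁₁) * Z,
    f₂₂ - (-f₁₂ - g₂₂) * Z, ?_, ?_, ?_, ?_, ?_, ?_⟩
  · refine (hg₂₂.sub hg₁₁).sub_mul_of_sub_eq_conj_mul hZ fun l hl z hz hzl hb => ?_
    simp only [MeroOn.poles_sub, Set.mem_union, not_or] at hb
    exact h4 l hl z hz hzl hb.2 hb.1
  · refine (hf₁₂.sub hg₁₁).sub_mul_of_sub_eq_conj_mul hZ fun l hl z hz hzl hb => ?_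
    simp only [MeroOn.poles_sub, Set.mem_union, not_or] at hb
    simpa only [MeroOn.toFun_sub, mul_sub] using h5 l hl z hz hzl hb.1 hb.2
  · refine (hf₁₂.neg.sub hg₂₂).sub_mul_of_sub_eq_conj_mul hZ fun l hl z hz hzl hb => ?_
    simp only [MeroOn.poles_sub, MeroOn.poles_neg, Set.mem_union, not_or] at hb
    rw [h6 l hl z hz hzl hb.1 hb.2]
    simp only [MeroOn.toFun_sub, MeroOn.toFun_neg]
    ring
  all_goals intros; simp only [MeroOn.toFun_sub, MeroOn.toFun_mul, MeroOn.toFun_neg]; ring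

/-- The "form II" case (`g₁₂ = 0`) of the classification of solutions of the
invariance equations for meromorphic affine connections on primary Kodaira
surfaces. -/
theorem stmt_4 (τ' : ℂ) (hτ' : 0 < τ'.im)
    (Λ : Set ℂ) (hΛ : Λ = {z : ℂ | ∃ m n : ℤ, z = (m : ℂ) + (n : ℂ) * τ'})
    (Z g₁₁ g₂₂ g₂₁ f₁₁ f₁₂ f₂₂ : MeroOn)
    (hZ : ∀ l ∈ Λ, ∀ z : ℂ, z ∉ Z.poles → z + l ∉ Z.poles →
      Z.toFun (z + l) - Z.toFun z = conj l)
    (h1 : ∀ l ∈ Λ, ∀ z : ℂ, z ∉ g₁₁.poles → z + l ∉ g₁₁.poles →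
      g₁₁.toFun (z + l) - g₁₁.toFun z = 0)
    (h2 : ∀ l ∈ Λ, ∀ z : ℂ, z ∉ g₂₂.poles → z + l ∉ g₂₂.poles →
      g₂₂.toFun (z + l) - g₂₂.toFun z = 0)
    (h3 : ∀ l ∈ Λ, ∀ z : ℂ, z ∉ f₁₂.poles → z + l ∉ f₁₂.poles →
      f₁₂.toFun (z + l) - f₁₂.toFun z = 0)
    (h4 : ∀ l ∈ Λ, ∀ z : ℂ, z ∉ g₂₁.poles → z + l ∉ g₂₁.poles →
      z ∉ g₁₁.poles → z ∉ g₂₂.poles →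
      g₂₁.toFun (z + l) - g₂₁.toFun z = conj l * (g₂₂.toFun z - g₁₁.toFun z))
    (h5 : ∀ l ∈ Λ, ∀ z : ℂ, z ∉ f₁₁.poles → z + l ∉ f₁₁.poles →
      z ∉ f₁₂.poles → z ∉ g₁₁.poles →
      f₁₁.toFun (z + l) - f₁₁.toFun z = conj l * f₁₂.toFun z - conj l * g₁₁.toFun z)
    (h6 : ∀ l ∈ Λ, ∀ z : ℂ, z ∉ f₂₂.poles → z + l ∉ f₂₂.poles →
      z ∉ f₁₂.poles → z ∉ g₂₂.poles →
      f₂₂.toFun (z + l) - f₂₂.toFun z = -conj l * f₁₂.toFun z - conj l * g₂₂.toFun z) :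
    IsElliptic Λ g₁₁ ∧ IsElliptic Λ g₂₂ ∧ IsElliptic Λ f₁₂ ∧
    ∃ e₂₁ e₁₁ e₂₂ : MeroOn,
      IsElliptic Λ e₂₁ ∧ IsElliptic Λ e₁₁ ∧ IsElliptic Λ e₂₂ ∧
      (∀ z : ℂ, z ∉ g₂₁.poles → z ∉ g₁₁.poles → z ∉ g₂₂.poles → z ∉ Z.poles →
        z ∉ e₂₁.poles →
        g₂₁.toFun z = (g₂₂.toFun z - g₁₁.toFun z) * Z.toFun z + e₂₁.toFun z) ∧
      (∀ z : ℂ, z ∉ f₁₁.poles → z ∉ f₁₂.poles → z ∉ g₁₁.poles → z ∉ Z.poles →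
        z ∉ e₁₁.poles →
        f₁₁.toFun z = (f₁₂.toFun z - g₁₁.toFun z) * Z.toFun z + e₁₁.toFun z) ∧
      (∀ z : ℂ, z ∉ f₂₂.poles → z ∉ f₁₂.poles → z ∉ g₂₂.poles → z ∉ Z.poles →
        z ∉ e₂₂.poles →
        f₂₂.toFun z = (-f₁₂.toFun z - g₂₂.toFun z) * Z.toFun z + e₂₂.toFun z) :=
  stmt_4_general Λ Z g₁₁ g₂₂ g₂₁ f₁₁ f₁₂ f₂₂ hZ h1 h2 h3 h4 h5 h6
end

section
/- Let h : ℂ ∖ {0} → ℂ be holomorphic, let λ ∈ ℂ with 0 < |λ| < 1, and let μ ∈ ℂ. If h(λu) = h(u) + μ for every u ∈ ℂ ∖ {0}, then h is constant on ℂ ∖ {0} and μ = 0. -/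
open Complex

open Set Bornology

/-- A holomorphic function on the punctured plane satisfying
`h (λ u) = h u + μ` with `0 < |λ| < 1` is constant, and `μ = 0`. -/
theorem stmt_6 (h : ℂ → ℂ) (hh : DifferentiableOn ℂ h {(0 : ℂ)}ᶜ)
    (l μ : ℂ) (hl0 : 0 < ‖l‖) (hl1 : ‖l‖ < 1)
    (heq : ∀ u : ℂ, u ≠ 0 → h (l * u) = h u + μ) :
    (∀ u v : ℂ, u ≠ 0 → v ≠ 0 → h u = h v) ∧ μ = 0 := by
  have hl : l ≠ 0 := fun hc => by simp [hc] at hl0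
  set p : ℂ := Complex.log l with hp
  have hpre : p.re < 0 := by
    rw [hp, Complex.log_re]
    exact Real.log_neg hl0 hl1
  have hpre0 : p.re ≠ 0 := ne_of_lt hpre
  set H : ℂ → ℂ := fun z => h (Complex.exp z) with hHdef
  have hH : Differentiable ℂ H := by
    intro z
    exact (hh.differentiableAt (isOpen_compl_singleton.mem_nhds (Complex.exp_ne_zero z))).comp z
      (Complex.differentiable_exp z)
  have hHp : ∀ z, H (z + p) = H z + μ := by
    intro z
    have : Complex.exp (z + p) = l * Complex.exp z := by
      rw [Complex.exp_add, hp, Complex.exp_log hl, mul_comm]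
    simp only [hHdef, this]
    exact heq _ (Complex.exp_ne_zero z)
  have hH2 : ∀ z, H (z + 2 * Real.pi * I) = H z := by
    intro z
    simp only [hHdef, Complex.exp_periodic z]
  set G : ℂ → ℂ := deriv H with hGdef
  have hG : Differentiable ℂ G :=
    differentiableOn_univ.mp
      ((hH.differentiableOn.analyticOnNhd isOpen_univ).deriv.differentiableOn)
  have hGp : Function.Periodic G p := by
    intro z
    have : deriv (fun x => H (x + p)) z = deriv (fun x => H x + μ) z := by
      congr 1; funext x; exact hHp x
    rwa [deriv_comp_add_const, deriv_add_const] at this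
  have hG2 : Function.Periodic G (2 * Real.pi * I) := by
    intro z
    have : deriv (fun x => H (x + 2 * Real.pi * I)) z = deriv H z := by
      congr 1; funext x; exact hH2 x
    rwa [deriv_comp_add_const] at this
  have hbound : range G ⊆ G '' (Metric.closedBall 0 (‖p‖ + 2 * Real.pi)) := by
    rintro - ⟨z, rfl⟩
    set s : ℝ := z.re / p.re with hs
    set t : ℝ := (z.im - s * p.im) / (2 * Real.pi) with ht
    have hpi : (Real.pi : ℝ) ≠ 0 := Real.pi_ne_zero
    have hre : s * p.re = z.re := by rw [hs]; field_simp
    have him : s * p.im + t * (2 * Real.pi) = z.im := by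
      rw [ht]; field_simp; ring
    have hz : z = (s : ℂ) * p + (t : ℂ) * (2 * Real.pi * I) := by
      apply Complex.ext
      · simp only [Complex.add_re, Complex.mul_re, Complex.mul_im, Complex.ofReal_re,
          Complex.ofReal_im, Complex.I_re, Complex.I_im, Complex.re_ofReal_mul,
          Complex.ofReal_ofNat, Complex.re_ofNat, Complex.im_ofNat]
        rw [← hre]; ring
      · simp only [Complex.add_im, Complex.mul_re, Complex.mul_im, Complex.ofReal_re,
          Complex.ofReal_im, Complex.I_re, Complex.I_im, Complex.re_ofReal_mul,
          Complex.ofReal_ofNat, Complex.re_ofNat, Complex.im_ofNat]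
        rw [← him]; ring
    set w : ℂ := (↑(Int.fract s) : ℂ) * p + (↑(Int.fract t) : ℂ) * (2 * Real.pi * I) with hw
    have hzw : z = w + (⌊s⌋ : ℤ) * p + (⌊t⌋ : ℤ) * (2 * Real.pi * I) := by
      rw [hw]
      nth_rewrite 1 [hz]
      have h1 : (s : ℂ) = (↑(Int.fract s) : ℂ) + (⌊s⌋ : ℤ) := by
        rw [Int.fract]; push_cast; ring
      have h2 : (t : ℂ) = (↑(Int.fract t) : ℂ) + (⌊t⌋ : ℤ) := by
        rw [Int.fract]; push_cast; ring
      rw [h1, h2]; ring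
    have hGzw : G z = G w := by
      rw [hzw, (hG2.int_mul ⌊t⌋) (w + (⌊s⌋ : ℤ) * p), (hGp.int_mul ⌊s⌋) w]
    have hwball : w ∈ Metric.closedBall (0 : ℂ) (‖p‖ + 2 * Real.pi) := by
      rw [Metric.mem_closedBall, dist_zero_right]
      calc ‖w‖ ≤ ‖(↑(Int.fract s) : ℂ) * p‖ + ‖(↑(Int.fract t) : ℂ) * (2 * Real.pi * I)‖ :=
            norm_add_le _ _
        _ = |Int.fract s| * ‖p‖ + |Int.fract t| * (2 * Real.pi) := by
            simp [norm_mul, Complex.norm_real, _root_.abs_of_nonneg Real.pi_pos.le,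
              Real.pi_nonneg]
        _ ≤ 1 * ‖p‖ + 1 * (2 * Real.pi) := by
            gcongr
            · exact abs_le.mpr ⟨by linarith [Int.fract_nonneg s], (Int.fract_lt_one s).le⟩
            · exact abs_le.mpr ⟨by linarith [Int.fract_nonneg t], (Int.fract_lt_one t).le⟩
        _ = ‖p‖ + 2 * Real.pi := by ring
    exact ⟨w, hwball, hGzw.symm⟩
  have hBd : IsBounded (range G) :=
    ((isCompact_closedBall (0 : ℂ) _).image hG.continuous).isBounded.subset hbound
  have hGconst : ∀ z, G z = G 0 := fun z => hG.apply_eq_apply_of_bounded hBd z 0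
  -- H is affine
  have hFd : Differentiable ℂ (fun z => H z - G 0 * z) :=
    hH.sub ((differentiable_id.const_mul (G 0)))
  have hFc : ∀ z, H z - G 0 * z = H 0 - G 0 * 0 := by
    intro z
    apply is_const_of_deriv_eq_zero hFd _ z 0
    intro x
    have h1 : HasDerivAt (fun z : ℂ => G 0 * z) (G 0) x := by
      simpa using (hasDerivAt_id x).const_mul (G 0)
    have h2 : HasDerivAt (fun z => H z - G 0 * z) (G x - G 0) x :=
      ((hH x).hasDerivAt).sub h1
    rw [h2.deriv, hGconst x, sub_self]
  have hHaff : ∀ z, H z = G 0 * z + H 0 := by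
    intro z
    have := hFc z
    rw [mul_zero, sub_zero] at this
    linear_combination this
  have hG00 : G 0 = 0 := by
    have h1 := hH2 0
    rw [zero_add, hHaff (2 * Real.pi * I), hHaff 0, mul_zero, zero_add] at h1
    have h2 : G 0 * (2 * Real.pi * I) = 0 := by linear_combination h1
    have h2pi : (2 * Real.pi * I : ℂ) ≠ 0 := by
      simp [Real.pi_ne_zero, Complex.I_ne_zero, Complex.ofReal_ne_zero]
    exact (mul_eq_zero.mp h2).resolve_right h2pi
  have hHconst : ∀ z, H z = H 0 := by
    intro z; rw [hHaff z, hG00, zero_mul, zero_add]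
  constructor
  · intro u v hu hv
    have hu' : h u = H 0 := by
      rw [← hHconst (Complex.log u)]
      simp only [hHdef, Complex.exp_log hu]
    have hv' : h v = H 0 := by
      rw [← hHconst (Complex.log v)]
      simp only [hHdef, Complex.exp_log hv]
    rw [hu', hv']
  · have := hHp 0
    rw [zero_add, hHconst p] at this
    linear_combination this.symm
end

section
/- Let h : ℂ ∖ {0} → ℂ be holomorphic and let λ ∈ ℂ with 0 < |λ| < 1. If h(λu) = h(u)/λ for every u ∈ ℂ ∖ {0}, then there exists c ∈ ℂ such that h(u) = c/u for all u ∈ ℂ ∖ {0}. In particular, if in addition h admits a holomorphic primitive on ℂ ∖ {0} (i.e. there is a holomorphic H : ℂ ∖ {0} → ℂ with H′ = h), then h is identically zero. -/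
open Complex

/-- A holomorphic function on the punctured plane satisfying
`h (λ u) = h u / λ` with `0 < |λ| < 1` is of the form `c / u`; if moreover `h`
admits a holomorphic primitive on `ℂ ∖ {0}`, then `h` vanishes identically. -/
theorem stmt_7 (h : ℂ → ℂ) (hh : DifferentiableOn ℂ h {(0 : ℂ)}ᶜ)
    (l : ℂ) (hl0 : 0 < ‖l‖) (hl1 : ‖l‖ < 1)
    (heq : ∀ u : ℂ, u ≠ 0 → h (l * u) = h u / l) :
    (∃ c : ℂ, ∀ u : ℂ, u ≠ 0 → h u = c / u) ∧
    ((∃ H : ℂ → ℂ, DifferentiableOn ℂ H {(0 : ℂ)}ᶜ ∧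
        ∀ u : ℂ, u ≠ 0 → HasDerivAt H (h u) u) →
      ∀ u : ℂ, u ≠ 0 → h u = 0) := by
  have hlne : l ≠ 0 := by
    intro hl; rw [hl] at hl0; simp at hl0
  set g : ℂ → ℂ := fun u => u * h u with hg
  have hgdiff : DifferentiableOn ℂ g {(0 : ℂ)}ᶜ :=
    (differentiableOn_id).mul hh
  -- invariance of g under multiplication by l
  have key : ∀ u : ℂ, u ≠ 0 → g (l * u) = g u := by
    intro u hu
    simp only [hg]
    rw [heq u hu]
    field_simp
  have keyz : ∀ n : ℤ, ∀ u : ℂ, u ≠ 0 → g (l ^ n * u) = g u := by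
    intro n
    induction n using Int.induction_on with
    | zero => intro u hu; simp
    | succ k ih =>
        intro u hu
        have h1 : l ^ ((k : ℤ) + 1) * u = l * (l ^ (k : ℤ) * u) := by
          rw [zpow_add₀ hlne, zpow_one]; ring
        rw [h1, key _ (mul_ne_zero (zpow_ne_zero _ hlne) hu), ih u hu]
  -- bound on the annulus
    | pred k ih =>
        intro u hu
        have h1 : l ^ (-(k : ℤ)) * u = l * (l ^ (-(k : ℤ) - 1) * u) := by
          rw [show (-(k:ℤ)) = 1 + (-(k:ℤ)-1) by ring, zpow_add₀ hlne]
          simp [zpow_add₀ hlne]; ring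
        have h2 := key (l ^ (-(k : ℤ) - 1) * u) (mul_ne_zero (zpow_ne_zero _ hlne) hu)
        rw [← h1] at h2
        calc g (l ^ (-(k:ℤ) - 1) * u) = g (l ^ (-(k:ℤ)) * u) := h2.symm
          _ = g u := ih u hu
  set A : Set ℂ := (fun z : ℂ => ‖z‖) ⁻¹' Set.Icc (‖l‖) 1 with hA
  have hAcompact : IsCompact A :=
    (isCompact_closedBall (0:ℂ) 1).of_isClosed_subset
      (isClosed_Icc.preimage continuous_norm)
      (fun u hu => by
        simpa [Complex.dist_eq] using hu.2)
  have hAsub : A ⊆ {(0:ℂ)}ᶜ := by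
    intro u hu hu0
    simp only [Set.mem_singleton_iff] at hu0
    subst hu0
    simpa using lt_of_lt_of_le hl0 hu.1
  have hgcont : ContinuousOn g A := (hgdiff.continuousOn).mono hAsub
  obtain ⟨M, hM⟩ := hAcompact.exists_bound_of_continuousOn hgcont
  -- every nonzero u can be scaled into A by a power of l
  have hbound : ∀ u : ℂ, u ≠ 0 → ‖g u‖ ≤ M := by
    intro u hu
    have habsu : 0 < ‖u‖ := by
      simpa [norm_pos_iff] using hu
    have hy : 1 < (‖l‖)⁻¹ := (one_lt_inv₀ hl0).2 hl1
    obtain ⟨n, hn1, hn2⟩ := exists_mem_Ioc_zpow habsu hy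
    -- (|l|⁻¹)^n < |u| ≤ (|l|⁻¹)^(n+1)
    set v : ℂ := l ^ (n + 1) * u with hv
    have hvA : v ∈ A := by
      have habs : ‖v‖ = (‖l‖) ^ (n+1) * ‖u‖ := by
        simp [hv, map_zpow₀]
      simp only [hA, Set.mem_preimage, Set.mem_Icc]
      constructor
      · rw [habs]
        have hident : ‖l‖ = (‖l‖) ^ (n+1) * (‖l‖)⁻¹ ^ n := by
          rw [inv_zpow, ← zpow_neg, ← zpow_add₀ (ne_of_gt hl0)]; norm_num
        calc ‖l‖ = (‖l‖) ^ (n+1) * (‖l‖)⁻¹ ^ n := hident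
          _ ≤ (‖l‖) ^ (n+1) * ‖u‖ :=
              mul_le_mul_of_nonneg_left hn1.le (zpow_nonneg hl0.le _)
      · rw [habs]
        calc (‖l‖) ^ (n+1) * ‖u‖
            ≤ (‖l‖) ^ (n+1) * (‖l‖)⁻¹ ^ (n+1) := by
              apply mul_le_mul_of_nonneg_left hn2 (zpow_nonneg hl0.le _)
          _ = 1 := by
              rw [inv_zpow, ← zpow_neg, ← zpow_add₀ (ne_of_gt hl0)]
              norm_num
    have := keyz (n+1) u hu
    rw [← hv] at this
    rw [← this]
    exact hM v hvA
  -- removable singularity: extend g to an entire function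
  set G : ℂ → ℂ := Function.update g 0 (Filter.limUnder (nhdsWithin 0 {(0:ℂ)}ᶜ) g) with hG
  have hGdiff : DifferentiableOn ℂ G Set.univ := by
    apply Complex.differentiableOn_update_limUnder_of_bddAbove (Filter.univ_mem)
    · have huniv : Set.univ \ {(0:ℂ)} = {(0:ℂ)}ᶜ := by ext x; simp
      rw [huniv]; exact hgdiff
    · refine ⟨max M 0, ?_⟩
      rintro x ⟨u, hu, rfl⟩
      have hu0 : u ≠ 0 := by
        intro hu0; subst hu0; exact hu.2 rfl
      exact le_max_of_le_left (hbound u hu0)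
  have hGdiff' : Differentiable ℂ G := fun z =>
    (hGdiff z (Set.mem_univ z)).differentiableAt Filter.univ_mem
  have hGbdd : Bornology.IsBounded (Set.range G) := by
    rw [Metric.isBounded_iff_subset_closedBall 0]
    refine ⟨max M (‖G 0‖), ?_⟩
    rintro x ⟨u, rfl⟩
    rcases eq_or_ne u 0 with rfl | hu
    · simp [Complex.dist_eq]
    · have : G u = g u := Function.update_of_ne hu _ _
      rw [Metric.mem_closedBall, dist_zero_right, this]
      exact le_max_of_le_left (hbound u hu)
  -- Liouville
  set c : ℂ := G 1 with hc
  have hGconst : ∀ u : ℂ, G u = c := fun u =>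
    hGdiff'.apply_eq_apply_of_bounded hGbdd u 1
  have hform : ∀ u : ℂ, u ≠ 0 → h u = c / u := by
    intro u hu
    have h1 : G u = g u := Function.update_of_ne hu _ _
    have h2 : g u = c := by rw [← h1, hGconst u]
    have h2' : u * h u = c := h2
    rw [eq_div_iff hu, mul_comm]
    exact h2'
  constructor
  · exact ⟨c, hform⟩
  · rintro ⟨H, hHdiff, hHderiv⟩ u hu
    -- define F t = H (exp t) - c * t, derivative zero, so constant
    have hF : ∀ t : ℂ, HasDerivAt (fun t => H (Complex.exp t) - c * t) 0 t := by
      intro t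
      have h1 : HasDerivAt (fun t => H (Complex.exp t)) (h (Complex.exp t) * Complex.exp t) t :=
        (hHderiv _ (Complex.exp_ne_zero t)).comp t (Complex.hasDerivAt_exp t)
      have h2 : h (Complex.exp t) * Complex.exp t = c := by
        rw [hform _ (Complex.exp_ne_zero t)]
        field_simp
      rw [h2] at h1
      refine (h1.sub ((hasDerivAt_id t).const_mul c)).congr_deriv ?_
      simp
    have hFconst : H (Complex.exp (2 * Real.pi * Complex.I)) - c * (2 * Real.pi * Complex.I) =
        H (Complex.exp 0) - c * 0 :=
      is_const_of_deriv_eq_zero (f := fun t => H (Complex.exp t) - c * t)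
        (fun t => (hF t).differentiableAt)
        (fun t => (hF t).deriv) (2 * Real.pi * Complex.I) 0
    have hc0 : c = 0 := by
      simp only [Complex.exp_two_pi_mul_I, Complex.exp_zero, mul_zero, sub_zero] at hFconst
      have h3 : c * (2 * Real.pi * Complex.I) = 0 := sub_eq_self.mp hFconst
      have h4 : (2 * (Real.pi : ℂ) * Complex.I) ≠ 0 := by
        simp [Real.pi_ne_zero, Complex.I_ne_zero]
      exact (mul_eq_zero.mp h3).resolve_right h4
    rw [hform u hu, hc0, zero_div]
end
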